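/- arXiv:math/0312297 — 5 statements merged into one kernel-verified Lean document; each statement's English description precedes it below -/
import Mathlib

section
/- A square matrix M with entries in a field is uniquely determined by its initial minors, provided all initial minors are nonzero. That is, if two n × n matrices have all initial minors nonzero and equal, then the matrices are equal. -/
/-- The solid minor of an `n × n` matrix of size `s` whose rows are
`a, a+1, …, a+s-1` and whose columns are `b, b+1, …, b+s-1`. -/
def solidMinor {F : Type*} [Field F] {n : ℕ} (M : Matrix (Fin n) (Fin n) F)
    (s a b : ℕ) (ha : a + s ≤ n) (hb : b + s ≤ n) : F :=
  (M.submatrix (fun t : Fin s => (⟨a + t.val, by omega⟩ : Fin n))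
               (fun t : Fin s => (⟨b + t.val, by omega⟩ : Fin n))).det

/-!
Induct on `i + j`. The entry `(i, j)` is the bottom-right corner of the initial minor of size
`min i j + 1` ending there, and every other entry of that minor has a smaller index sum.
Expanding along the last row, this minor is an affine function of the corner entry whose slope
is the initial minor of size `min i j` (or `1`); since that slope is nonzero, the corner entry is
determined by the minor.
-/

open Matrix Fin

theorem Matrix.det_sub_det_of_eq_of_ne_last {R : Type*} [CommRing R] {m : ℕ}
    (M N : Matrix (Fin (m + 1)) (Fin (m + 1)) R)
    (h : ∀ i j, (i ≠ last m ∨ j ≠ last m) → M i j = N i j) :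
    M.det - N.det =
      (M (last m) (last m) - N (last m) (last m)) * (N.submatrix castSucc castSucc).det := by
  have hminor (j : Fin (m + 1)) :
      M.submatrix castSucc j.succAbove = N.submatrix castSucc j.succAbove :=
    Matrix.ext fun r _ => h _ _ (Or.inl (castSucc_lt_last r).ne)
  rw [det_succ_row M (last m), det_succ_row N (last m), succAbove_last,
    ← Finset.sum_sub_distrib, Finset.sum_eq_single (last m)]
  · rw [hminor, succAbove_last, Even.neg_one_pow ⟨_, rfl⟩]
    ring
  · intro j _ hj
    rw [h _ _ (Or.inr hj), hminor, sub_self]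
  · simp

theorem solidMinor_zero {F : Type*} [Field F] {n : ℕ} (M : Matrix (Fin n) (Fin n) F)
    (a b : ℕ) (ha : a + 0 ≤ n) (hb : b + 0 ≤ n) : solidMinor M 0 a b ha hb = 1 :=
  det_isEmpty

theorem solidMinor_succ_sub_solidMinor_succ {F : Type*} [Field F] {n : ℕ}
    (A B : Matrix (Fin n) (Fin n) F) (s a b : ℕ) (ha : a + (s + 1) ≤ n) (hb : b + (s + 1) ≤ n)
    (h : ∀ r c : Fin n, a ≤ r → r ≤ a + s → b ≤ c → c ≤ b + s →
      (r.val ≠ a + s ∨ c.val ≠ b + s) → A r c = B r c) :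
    solidMinor A (s + 1) a b ha hb - solidMinor B (s + 1) a b ha hb =
      (A ⟨a + s, by omega⟩ ⟨b + s, by omega⟩ -
        B ⟨a + s, by omega⟩ ⟨b + s, by omega⟩) * solidMinor B s a b (by omega) (by omega) :=
  det_sub_det_of_eq_of_ne_last _ _ fun r c hrc => by
    have := r.is_le
    have := c.is_le
    rw [ne_iff_vne, ne_iff_vne, val_last] at hrc
    refine h _ _ ?_ ?_ ?_ ?_ ?_ <;> simp only <;> omega

theorem apply_eq_of_solidMinor_eq {F : Type*} [Field F] {n : ℕ}
    (A B : Matrix (Fin n) (Fin n) F) (i j : Fin n) (s : ℕ) (hi : s ≤ i) (hj : s ≤ j)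
    (hdet : solidMinor A (s + 1) (i - s) (j - s) (by omega) (by omega) =
      solidMinor B (s + 1) (i - s) (j - s) (by omega) (by omega))
    (hminor : solidMinor B s (i - s) (j - s) (by omega) (by omega) ≠ 0)
    (hlt : ∀ r c : Fin n, r.val + c.val < i.val + j.val → A r c = B r c) :
    A i j = B i j := by
  have hcorner := solidMinor_succ_sub_solidMinor_succ A B s (i - s) (j - s) (by omega) (by omega)
    fun r c _ hr _ hc hrc => hlt r c (by omega)
  rw [hdet, sub_self, eq_comm, mul_eq_zero, or_iff_left hminor, sub_eq_zero] at hcorner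
  convert hcorner using 2 <;> ext <;> simp only <;> omega

theorem matrix_eq_of_initialMinors_eq_general {F : Type*} [Field F] {n : ℕ}
    (A B : Matrix (Fin n) (Fin n) F)
    (hB : ∀ (s a b : ℕ) (ha : a + s ≤ n) (hb : b + s ≤ n),
      1 ≤ s → (a = 0 ∨ b = 0) → solidMinor B s a b ha hb ≠ 0)
    (hAB : ∀ (s a b : ℕ) (ha : a + s ≤ n) (hb : b + s ≤ n),
      1 ≤ s → (a = 0 ∨ b = 0) →
      solidMinor A s a b ha hb = solidMinor B s a b ha hb) :
    A = B := by
  suffices h : ∀ k, ∀ i j : Fin n, i.val + j.val = k → A i j = B i j from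
    Matrix.ext fun i j => h _ i j rfl
  intro k
  induction k using Nat.strong_induction_on with
  | _ k ih =>
    rintro i j rfl
    have hinitial : i - min i.val j.val = 0 ∨ j - min i.val j.val = 0 := by omega
    refine apply_eq_of_solidMinor_eq A B i j _ (min_le_left _ _) (min_le_right _ _)
      (hAB _ _ _ _ _ (by omega) hinitial) ?_ fun r c hrc => ih _ hrc r c rfl
    rcases Nat.eq_zero_or_pos (min i.val j.val) with h0 | hpos
    · simpa only [h0, solidMinor_zero] using one_ne_zero
    · exact hB _ _ _ _ _ hpos hinitial

/-- A square matrix over a field is uniquely determined by its initial minors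
(solid minors containing the first row or the first column), provided all of
these minors are nonzero: if two `n × n` matrices have all initial minors
nonzero and equal, then the matrices are equal. -/
theorem matrix_eq_of_initialMinors_eq {F : Type*} [Field F] {n : ℕ}
    (A B : Matrix (Fin n) (Fin n) F)
    (hA : ∀ (s a b : ℕ) (ha : a + s ≤ n) (hb : b + s ≤ n),
      1 ≤ s → (a = 0 ∨ b = 0) → solidMinor A s a b ha hb ≠ 0)
    (hB : ∀ (s a b : ℕ) (ha : a + s ≤ n) (hb : b + s ≤ n),
      1 ≤ s → (a = 0 ∨ b = 0) → solidMinor B s a b ha hb ≠ 0)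
    (hAB : ∀ (s a b : ℕ) (ha : a + s ≤ n) (hb : b + s ≤ n),
      1 ≤ s → (a = 0 ∨ b = 0) →
      solidMinor A s a b ha hb = solidMinor B s a b ha hb) :
    A = B :=
  matrix_eq_of_initialMinors_eq_general A B hB hAB
end

section
/- The cones C_T, as T ranges over all plane binary trees with n−1 leaves, have pairwise disjoint interiors and their union is all of R^{n−3}; i.e., they form the maximal cones of a complete simplicial fan in R^{n−3}. -/
/-- A plane binary tree: every vertex has either two ordered children or none. -/
inductive PlaneBinaryTree : Type
  | leaf : PlaneBinaryTree
  | node : PlaneBinaryTree → PlaneBinaryTree → PlaneBinaryTree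

namespace PlaneBinaryTree

/-- The number of leaves. -/
def leaves : PlaneBinaryTree → ℕ
  | .leaf => 1
  | .node l r => l.leaves + r.leaves

/-- The number of internal vertices. -/
def ic : PlaneBinaryTree → ℕ
  | .leaf => 0
  | .node l r => l.ic + r.ic + 1

/-- The label of the root of a tree whose internal vertices are labeled
`o+1, …, o+ic` in the order of the first time one drops down to them from a
child in a left-to-right depth-first search (i.e. in in-order). -/
def rootLab : PlaneBinaryTree → ℕ → ℕ
  | .leaf, o => o
  | .node l _, o => o + l.ic + 1

/-- The set of parent-child pairs `(i, j)` of labels of internal vertices,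
where `i` is the label of the parent and `j` that of the child, for the
labeling of internal vertices by `o+1, …, o+ic` in in-order. -/
def pairs : PlaneBinaryTree → ℕ → Finset (ℕ × ℕ)
  | .leaf, _ => ∅
  | .node l r, o =>
      pairs l o ∪ pairs r (o + l.ic + 1) ∪
        (match l with
          | .leaf => ∅
          | .node l₁ l₂ => {(o + l.ic + 1, rootLab (PlaneBinaryTree.node l₁ l₂) o)}) ∪
        (match r with
          | .leaf => ∅
          | .node r₁ r₂ => {(o + l.ic + 1, rootLab (PlaneBinaryTree.node r₁ r₂) (o + l.ic + 1))})

end PlaneBinaryTree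

/-- The `t`-th coordinate (`1`-indexed) of a point of `ℝ^{n-3}`. -/
def coord {m : ℕ} (x : Fin m → ℝ) (t : ℕ) : ℝ :=
  if h : t - 1 < m then x ⟨t - 1, h⟩ else 0

/-- The Stanley–Pitman cone `C_T ⊆ ℝ^{n-3}` of a plane binary tree `T` with
`n−1` leaves: for each parent-child pair `(i,j)` of internal vertices, impose
`x_i + ⋯ + x_{j-1} ≥ 0` if `i < j` and `x_j + ⋯ + x_{i-1} ≤ 0` if `i > j`. -/
def spCone (n : ℕ) (T : PlaneBinaryTree) : Set (Fin (n - 3) → ℝ) :=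
  {x | ∀ p ∈ T.pairs 0,
    if p.1 < p.2 then 0 ≤ ∑ t ∈ Finset.Icc p.1 (p.2 - 1), coord x t
    else ∑ t ∈ Finset.Icc p.2 (p.1 - 1), coord x t ≤ 0}

/-!
With `y_t = x_1 + ⋯ + x_{t-1}`, the cone `C_T` is the set of `x` for which `y` increases weakly
along every edge of `T`, i.e. `y` is heap-ordered on the in-order labelling of `T`. Every `y` is
heap-ordered on its Cartesian tree, so the cones cover. At an interior point of `C_T` all edge
inequalities are strict, and a strict heap order determines the tree, because its root must be
the unique minimum of `y`; hence distinct cones have disjoint interiors.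
-/

namespace PlaneBinaryTree

variable {α : Type*}

theorem leaves_eq_ic_add_one (T : PlaneBinaryTree) : T.leaves = T.ic + 1 := by
  induction T with
  | leaf => rfl
  | node l r ihl ihr => simp only [leaves, ic, ihl, ihr]; omega

theorem rootLab_mem_Icc {T : PlaneBinaryTree} (hT : T ≠ leaf) (o : ℕ) :
    o + 1 ≤ T.rootLab o ∧ T.rootLab o ≤ o + T.ic := by
  cases T with
  | leaf => exact absurd rfl hT
  | node l r => simp only [rootLab, ic]; omega

theorem mem_pairs_node {l r : PlaneBinaryTree} {o : ℕ} {p : ℕ × ℕ} :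
    p ∈ (node l r).pairs o ↔ p ∈ l.pairs o ∨ p ∈ r.pairs (o + l.ic + 1) ∨
      (l ≠ leaf ∧ p = (o + l.ic + 1, l.rootLab o)) ∨
      (r ≠ leaf ∧ p = (o + l.ic + 1, r.rootLab (o + l.ic + 1))) := by
  cases l <;> cases r <;> (conv_lhs => rw [pairs]) <;>
    simp only [Finset.mem_union, Finset.mem_singleton, Finset.notMem_empty, ne_eq, reduceCtorEq,
      not_true_eq_false, not_false_eq_true, true_and, false_and, or_false] <;> tauto

theorem mem_pairs_bounds {T : PlaneBinaryTree} {o : ℕ} {p : ℕ × ℕ} (hp : p ∈ T.pairs o) :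
    o + 1 ≤ p.1 ∧ p.1 ≤ o + T.ic ∧ o + 1 ≤ p.2 ∧ p.2 ≤ o + T.ic ∧ p.1 ≠ p.2 := by
  induction T generalizing o with
  | leaf => simp [pairs] at hp
  | node l r ihl ihr =>
    simp only [ic]
    rcases mem_pairs_node.1 hp with hp | hp | ⟨hl, rfl⟩ | ⟨hr, rfl⟩
    · have := ihl hp; omega
    · have := ihr hp; omega
    · have := rootLab_mem_Icc hl o; dsimp only; omega
    · have := rootLab_mem_Icc hr (o + l.ic + 1); dsimp only; omega

/-- `y` increases weakly from parent to child, for the labelling of `T` by `o+1, …, o+T.ic`. -/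
def IsHeap [LE α] (y : ℕ → α) (T : PlaneBinaryTree) (o : ℕ) : Prop :=
  ∀ p ∈ T.pairs o, y p.1 ≤ y p.2

def IsStrictHeap [LT α] (y : ℕ → α) (T : PlaneBinaryTree) (o : ℕ) : Prop :=
  ∀ p ∈ T.pairs o, y p.1 < y p.2

/-- The Cartesian tree of `y`: the root is a minimum of `y`, and the subtrees are built
recursively on either side of it. -/
theorem exists_isHeap [LinearOrder α] (y : ℕ → α) (m o : ℕ) :
    ∃ T : PlaneBinaryTree, T.ic = m ∧ T.IsHeap y o := by
  induction m using Nat.strong_induction_on generalizing o with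
  | _ m ih =>
    rcases m with _ | m
    · exact ⟨leaf, rfl, by simp [IsHeap, pairs]⟩
    obtain ⟨k, hk, hkmin⟩ :=
      Finset.exists_min_image (Finset.Icc (o + 1) (o + (m + 1))) y ⟨o + 1, by simp⟩
    rw [Finset.mem_Icc] at hk
    obtain ⟨l, hl, hlheap⟩ := ih (k - o - 1) (by omega) o
    obtain ⟨r, hr, hrheap⟩ := ih (o + (m + 1) - k) (by omega) k
    have hk_eq : o + l.ic + 1 = k := by omega
    refine ⟨node l r, by simp only [ic]; omega, fun p hp => ?_⟩
    rw [mem_pairs_node, hk_eq] at hp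
    rcases hp with hp | hp | ⟨hl', rfl⟩ | ⟨hr', rfl⟩
    · exact hlheap p hp
    · exact hrheap p hp
    · have := rootLab_mem_Icc hl' o
      exact hkmin _ (Finset.mem_Icc.2 (by omega))
    · have := rootLab_mem_Icc hr' k
      exact hkmin _ (Finset.mem_Icc.2 (by omega))

namespace IsStrictHeap

variable [Preorder α] {y : ℕ → α} {l r : PlaneBinaryTree} {o : ℕ}

theorem left (h : (node l r).IsStrictHeap y o) : l.IsStrictHeap y o :=
  fun p hp => h p (mem_pairs_node.2 (Or.inl hp))

theorem right (h : (node l r).IsStrictHeap y o) : r.IsStrictHeap y (o + l.ic + 1) :=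
  fun p hp => h p (mem_pairs_node.2 (Or.inr (Or.inl hp)))

theorem apply_rootLab_lt {T : PlaneBinaryTree} (h : T.IsStrictHeap y o) {k : ℕ}
    (hk₁ : o + 1 ≤ k) (hk₂ : k ≤ o + T.ic) (hk : k ≠ T.rootLab o) : y (T.rootLab o) < y k := by
  induction T generalizing o with
  | leaf => simp only [ic] at hk₂; omega
  | node l r ihl ihr =>
    simp only [rootLab, ic] at hk hk₂ ⊢
    rcases Nat.lt_or_gt_of_ne hk with hkl | hkr
    · have hl : l ≠ leaf := by rintro rfl; simp only [ic] at hkl; omega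
      have hroot : y (o + l.ic + 1) < y (l.rootLab o) :=
        h _ (mem_pairs_node.2 (Or.inr (Or.inr (Or.inl ⟨hl, rfl⟩))))
      rcases eq_or_ne k (l.rootLab o) with rfl | hk'
      · exact hroot
      · exact hroot.trans (ihl h.left hk₁ (by omega) hk')
    · have hr : r ≠ leaf := by rintro rfl; simp only [ic] at hk₂; omega
      have hroot : y (o + l.ic + 1) < y (r.rootLab (o + l.ic + 1)) :=
        h _ (mem_pairs_node.2 (Or.inr (Or.inr (Or.inr ⟨hr, rfl⟩))))
      rcases eq_or_ne k (r.rootLab (o + l.ic + 1)) with rfl | hk'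
      · exact hroot
      · exact hroot.trans (ihr h.right (by omega) (by omega) hk')

/-- A strict heap order determines the tree: its root is the unique minimum of `y`. -/
theorem eq {T T' : PlaneBinaryTree} (h : T.IsStrictHeap y o) (h' : T'.IsStrictHeap y o)
    (hic : T.ic = T'.ic) : T = T' := by
  induction T generalizing T' o with
  | leaf => cases T' with
    | leaf => rfl
    | node => simp [ic] at hic
  | node l r ihl ihr =>
    cases T' with
    | leaf => simp [ic] at hic
    | node l' r' =>
      simp only [ic] at hic
      have hroot : (node l r).rootLab o = (node l' r').rootLab o := by
        by_contra hne
        have h₁ := h.apply_rootLab_lt (k := (node l' r').rootLab o)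
          (by simp only [rootLab]; omega) (by simp only [rootLab, ic]; omega) (Ne.symm hne)
        have h₂ := h'.apply_rootLab_lt (k := (node l r).rootLab o)
          (by simp only [rootLab]; omega) (by simp only [rootLab, ic]; omega) hne
        exact lt_asymm h₁ h₂
      simp only [rootLab] at hroot
      have hl : l.ic = l'.ic := by omega
      rw [ihl h.left h'.left hl, ihr h.right (by rw [hl]; exact h'.right) (by omega)]

end IsStrictHeap

end PlaneBinaryTree

open Filter Topology in
theorem LinearMap.lt_zero_of_mem_interior_setOf_le {E : Type*} [AddCommGroup E] [Module ℝ E]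
    [TopologicalSpace E] [ContinuousAdd E] [ContinuousSMul ℝ E] {f : E →ₗ[ℝ] ℝ} (hf : f ≠ 0)
    {x : E} (hx : x ∈ interior {z | f z ≤ 0}) : f x < 0 := by
  obtain ⟨v, hv⟩ : ∃ v, f v = 1 := by
    obtain ⟨u, hu⟩ := DFunLike.ne_iff.1 hf
    exact ⟨(f u)⁻¹ • u, by simp_all⟩
  have hline : ∀ᶠ t in 𝓝 (0 : ℝ), x + t • v ∈ interior {z | f z ≤ 0} :=
    (by fun_prop : Continuous fun t : ℝ => x + t • v).continuousAt.preimage_mem_nhds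
      (by simpa using isOpen_interior.mem_nhds hx)
  obtain ⟨t, ht, htpos⟩ := ((hline.filter_mono nhdsWithin_le_nhds).and
    (self_mem_nhdsWithin : Set.Ioi (0 : ℝ) ∈ 𝓝[>] 0)).exists
  have := interior_subset ht
  simp only [Set.mem_ofPred_eq, map_add, map_smul, hv, smul_eq_mul, mul_one] at this
  linarith

namespace StanleyPitman

variable {m : ℕ}

theorem coord_single (k : Fin m) {t : ℕ} (ht : 1 ≤ t) :
    coord (Pi.single k (1 : ℝ)) t = if t = k + 1 then 1 else 0 := by
  unfold coord
  simp only [Pi.single_apply, Fin.ext_iff]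
  split_ifs <;> first | rfl | omega

def coordₗ (m t : ℕ) : (Fin m → ℝ) →ₗ[ℝ] ℝ :=
  if h : t - 1 < m then LinearMap.proj ⟨t - 1, h⟩ else 0

theorem coordₗ_apply (t : ℕ) (x : Fin m → ℝ) : coordₗ m t x = coord x t := by
  unfold coordₗ coord; split <;> rfl

/-- `partialSum m t x = x₁ + ⋯ + x_{t-1}`. -/
def partialSum (m t : ℕ) : (Fin m → ℝ) →ₗ[ℝ] ℝ :=
  ∑ s ∈ Finset.Ico 1 t, coordₗ m s

theorem partialSum_apply (t : ℕ) (x : Fin m → ℝ) :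
    partialSum m t x = ∑ s ∈ Finset.Ico 1 t, coord x s := by
  simp [partialSum, coordₗ_apply]

theorem sum_Icc_coord_eq_sub (x : Fin m → ℝ) {i j : ℕ} (hi : 1 ≤ i) (hij : i ≤ j) :
    ∑ t ∈ Finset.Icc i (j - 1), coord x t = partialSum m j x - partialSum m i x := by
  have hIcc : Finset.Icc i (j - 1) = Finset.Ico i j := by
    rw [← Finset.Ico_add_one_right_eq_Icc]; congr 1; omega
  rw [hIcc, partialSum_apply, partialSum_apply, ← Finset.sum_Ico_consecutive _ hi hij]
  ring

theorem partialSum_single (k : Fin m) (t : ℕ) :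
    partialSum m t (Pi.single k 1) = if k + 1 < t then 1 else 0 := by
  rw [partialSum_apply, Finset.sum_congr rfl fun s hs => coord_single k (Finset.mem_Ico.1 hs).1,
    Finset.sum_ite_eq' (Finset.Ico 1 t) _ fun _ => (1 : ℝ)]
  simp

theorem partialSum_ne {i j : ℕ} (hi : 1 ≤ i) (him : i ≤ m) (hij : i < j) :
    partialSum m i ≠ partialSum m j := by
  intro h
  have := LinearMap.congr_fun h (Pi.single ⟨i - 1, by omega⟩ 1)
  simp only [partialSum_single] at this
  split_ifs at this <;> first | omega | norm_num at this

end StanleyPitman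

open StanleyPitman PlaneBinaryTree

section

variable {n : ℕ} {T : PlaneBinaryTree}

theorem mem_spCone_iff {x : Fin (n - 3) → ℝ} :
    x ∈ spCone n T ↔ T.IsHeap (fun t => partialSum (n - 3) t x) 0 := by
  refine forall₂_congr fun p hp => ?_
  obtain ⟨hp₁, -, hp₂, -, -⟩ := mem_pairs_bounds hp
  split_ifs with h
  · rw [sum_Icc_coord_eq_sub x hp₁ h.le, sub_nonneg]
  · rw [sum_Icc_coord_eq_sub x hp₂ (by omega), sub_nonpos]

theorem spCone_eq_biInter (n : ℕ) (T : PlaneBinaryTree) :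
    spCone n T =
      ⋂ p ∈ T.pairs 0, {x | (partialSum (n - 3) p.1 - partialSum (n - 3) p.2) x ≤ 0} := by
  ext x
  simp only [mem_spCone_iff, IsHeap, Set.mem_iInter, Set.mem_ofPred_eq, LinearMap.sub_apply,
    sub_nonpos]

theorem isClosed_spCone (n : ℕ) (T : PlaneBinaryTree) : IsClosed (spCone n T) := by
  rw [spCone_eq_biInter]
  exact isClosed_biInter fun p _ =>
    isClosed_le (LinearMap.continuous_of_finiteDimensional _) continuous_const

theorem convex_spCone (n : ℕ) (T : PlaneBinaryTree) : Convex ℝ (spCone n T) := by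
  rw [spCone_eq_biInter]
  exact convex_iInter₂ fun p _ => convex_halfSpace_le (LinearMap.isLinear _) 0

theorem smul_mem_spCone {c : ℝ} {x : Fin (n - 3) → ℝ} (hc : 0 ≤ c) (hx : x ∈ spCone n T) :
    c • x ∈ spCone n T := by
  rw [mem_spCone_iff] at hx ⊢
  intro p hp
  simp only [map_smul, smul_eq_mul]
  exact mul_le_mul_of_nonneg_left (hx p hp) hc

theorem iUnion_spCone (hn : 2 ≤ n) :
    ⋃ T : {T : PlaneBinaryTree // T.leaves = n - 1}, spCone n T.1 = Set.univ := by
  refine Set.eq_univ_of_forall fun x => ?_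
  obtain ⟨T, hT, hheap⟩ := exists_isHeap (fun t => partialSum (n - 3) t x) (n - 2) 0
  exact Set.mem_iUnion.2
    ⟨⟨T, by rw [leaves_eq_ic_add_one, hT]; omega⟩, mem_spCone_iff.2 hheap⟩

theorem isStrictHeap_of_mem_interior_spCone (hT : T.ic = n - 2) {x : Fin (n - 3) → ℝ}
    (hx : x ∈ interior (spCone n T)) : T.IsStrictHeap (fun t => partialSum (n - 3) t x) 0 := by
  intro p hp
  obtain ⟨hp₁, hp₁', hp₂, hp₂', hne⟩ := mem_pairs_bounds hp
  have hsub : spCone n T ⊆ {x | (partialSum (n - 3) p.1 - partialSum (n - 3) p.2) x ≤ 0} := by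
    rw [spCone_eq_biInter]
    exact Set.biInter_subset_of_mem hp
  have hf : partialSum (n - 3) p.1 - partialSum (n - 3) p.2 ≠ 0 := by
    rw [sub_ne_zero]
    rcases Nat.lt_or_gt_of_ne hne with h | h
    · exact partialSum_ne hp₁ (by omega) h
    · exact (partialSum_ne hp₂ (by omega) h).symm
  simpa using LinearMap.lt_zero_of_mem_interior_setOf_le hf (interior_mono hsub hx)

theorem interior_spCone_inter_eq_empty {T T' : PlaneBinaryTree} (hT : T.leaves = n - 1)
    (hT' : T'.leaves = n - 1) (hne : T ≠ T') :
    interior (spCone n T) ∩ interior (spCone n T') = ∅ := by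
  rw [leaves_eq_ic_add_one] at hT hT'
  refine Set.eq_empty_of_forall_notMem fun x ⟨hx, hx'⟩ => hne ?_
  exact (isStrictHeap_of_mem_interior_spCone (by omega) hx).eq
    (isStrictHeap_of_mem_interior_spCone (by omega) hx') (by omega)

end

/-- The cones `C_T`, as `T` ranges over all plane binary trees with `n−1`
leaves, are the maximal cones of a complete simplicial fan in `ℝ^{n-3}`
(the Stanley–Pitman fan): each `C_T` is a closed convex cone, their union is
all of `ℝ^{n-3}`, and distinct cones have disjoint interiors. -/
theorem stanleyPitman_cones_form_complete_fan (n : ℕ) (hn : 3 ≤ n) :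
    (∀ T : PlaneBinaryTree, T.leaves = n - 1 →
      IsClosed (spCone n T) ∧ Convex ℝ (spCone n T) ∧
        ∀ (c : ℝ) (x : Fin (n - 3) → ℝ), 0 ≤ c → x ∈ spCone n T →
          c • x ∈ spCone n T) ∧
    (⋃ T : {T : PlaneBinaryTree // T.leaves = n - 1}, spCone n T.1) = Set.univ ∧
    (∀ T T' : PlaneBinaryTree, T.leaves = n - 1 → T'.leaves = n - 1 → T ≠ T' →
      interior (spCone n T) ∩ interior (spCone n T') = ∅) :=
  ⟨fun T _ => ⟨isClosed_spCone n T, convex_spCone n T, fun _ _ hc hx => smul_mem_spCone hc hx⟩,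
    iUnion_spCone (by omega), fun _ _ => interior_spCone_inter_eq_empty⟩
end

section
/- The positive tropical variety Trop+ V(I) is a closed subset of R^n: the set of w ∈ R^n such that in_w(I) contains no nonzero polynomial with all positive coefficients is closed. -/
/-!
If `in_w(I)` contains a positive polynomial `g`, it already contains one of the form `in_w(f)`
with `f ∈ I`. Indeed, initial forms are homogeneous for the grading of the monomials `x^e` by the
class of `w·e` modulo `ℚ`, and the part of `g` in the class of one of its monomials is the
weight-`C` part of a combination of `ℚ`-shifts `t^q x^a f` of elements of `I`, all of `w`-order at
least `C`. For `w'` near `w`, the initial form `in_{w'}(f)` is the initial form of `in_w(f)` with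
respect to `w' - w` (the minimizers of a slightly perturbed function on a finite set are the
minimizers of the perturbation among those of the function), so it is again a positive polynomial.
Hence the complement of `Trop⁺ V(I)` is open.
-/

open MvPolynomial Classical in
/-- The weight of the monomial with exponent vector `a` in `f` with respect to
the weight vector `w`: the order (valuation) of its Puiseux-series coefficient
plus `∑ wᵢ aᵢ` (the `t`-order after substituting `xᵢ ↦ xᵢ t^{wᵢ}`). -/
noncomputable def mWeight {n : ℕ} (w : Fin n → ℝ)
    (f : MvPolynomial (Fin n) (HahnSeries ℚ ℂ)) (a : Fin n →₀ ℕ) : ℝ :=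
  ((f.coeff a).order : ℝ) + ∑ i, w i * (a i : ℝ)

open MvPolynomial Classical in
/-- The initial form `in_w(f) ∈ ℂ[x₁,…,xₙ]` of a polynomial `f` with Puiseux
series coefficients: the sum, over exponent vectors of minimal weight, of the
leading coefficients of the corresponding Puiseux series coefficients. -/
noncomputable def initForm {n : ℕ} (w : Fin n → ℝ)
    (f : MvPolynomial (Fin n) (HahnSeries ℚ ℂ)) : MvPolynomial (Fin n) ℂ :=
  if h : f = 0 then 0 else
    ∑ a ∈ f.support.filter (fun a =>
        mWeight w f a = f.support.inf' (support_nonempty.mpr h) (mWeight w f)),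
      monomial a ((f.coeff a).coeff (f.coeff a).order)

/-- The initial ideal `in_w(I)`, generated by the initial forms of the
elements of `I`. -/
noncomputable def initIdeal {n : ℕ} (w : Fin n → ℝ)
    (I : Ideal (MvPolynomial (Fin n) (HahnSeries ℚ ℂ))) :
    Ideal (MvPolynomial (Fin n) ℂ) :=
  Ideal.span {g | ∃ f ∈ I, g = initForm w f}

open MvPolynomial Classical in
/-- The initial form of a polynomial with complex (constant) coefficients with
respect to a weight vector `η`: the sum of the terms whose `η`-weight
(dot product of the exponent vector with `η`) is minimal. -/
noncomputable def initFormC {n : ℕ} (η : Fin n → ℝ)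
    (f : MvPolynomial (Fin n) ℂ) : MvPolynomial (Fin n) ℂ :=
  if h : f = 0 then 0 else
    ∑ a ∈ f.support.filter (fun a =>
        ∑ i, η i * (a i : ℝ) =
          f.support.inf' (support_nonempty.mpr h) (fun b => ∑ i, η i * (b i : ℝ))),
      monomial a (f.coeff a)

/-- The initial ideal of an ideal of `ℂ[x₁,…,xₙ]` with respect to `η`. -/
noncomputable def initIdealC {n : ℕ} (η : Fin n → ℝ)
    (I : Ideal (MvPolynomial (Fin n) ℂ)) : Ideal (MvPolynomial (Fin n) ℂ) :=
  Ideal.span {g | ∃ f ∈ I, g = initFormC η f}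

/-- A nonzero polynomial over `ℂ` all of whose coefficients are positive
reals. -/
def AllPosCoeffs {n : ℕ} (g : MvPolynomial (Fin n) ℂ) : Prop :=
  g ≠ 0 ∧ ∀ a ∈ g.support, (g.coeff a).im = 0 ∧ 0 < (g.coeff a).re

open MvPolynomial Filter Topology

section Gap

variable {α : Type*}

theorem Finset.exists_pos_gap (S : Finset α) (φ : α → ℝ) :
    ∃ γ > 0, ∀ x ∈ S, ∀ y ∈ S, φ x < φ y → φ x + 2 * γ ≤ φ y := by
  have hev : ∀ᶠ γ in 𝓝[>] (0 : ℝ), ∀ p ∈ S ×ˢ S, φ p.1 < φ p.2 → φ p.1 + 2 * γ ≤ φ p.2 := by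
    refine (eventually_all_finset _).2 fun p _ => nhdsWithin_le_nhds ?_
    by_cases hp : φ p.1 < φ p.2
    · have : ∀ᶠ γ in 𝓝 (0 : ℝ), φ p.1 + 2 * γ < φ p.2 :=
        ContinuousAt.eventually_lt (by fun_prop) continuousAt_const (by simpa using hp)
      exact this.mono fun _ h _ => h.le
    · exact Eventually.of_forall fun _ h => absurd h hp
  obtain ⟨γ, hgap, hγ⟩ := (hev.and self_mem_nhdsWithin).exists
  exact ⟨γ, hγ, fun x hx y hy => hgap (x, y) (Finset.mem_product.2 ⟨hx, hy⟩)⟩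

theorem isMinOn_add_iff_of_gap {S : Set α} {φ ψ : α → ℝ} {γ : ℝ}
    (hgap : ∀ x ∈ S, ∀ y ∈ S, φ x < φ y → φ x + 2 * γ ≤ φ y) (hψ : ∀ x ∈ S, |ψ x| < γ)
    {x : α} (hx : x ∈ S) :
    IsMinOn (φ + ψ) S x ↔ IsMinOn φ S x ∧ IsMinOn ψ {y ∈ S | IsMinOn φ S y} x := by
  simp only [isMinOn_iff, Set.mem_ofPred_eq, Pi.add_apply, and_imp]
  have hψx := abs_lt.1 (hψ x hx)
  constructor
  · intro hmin
    have hφ : ∀ y ∈ S, φ x ≤ φ y := fun y hy => by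
      by_contra! hlt
      linarith [hgap y hy x hx hlt, abs_lt.1 (hψ y hy), hmin y hy]
    exact ⟨hφ, fun y hy hyφ => by linarith [hmin y hy, hφ y hy, hyφ x hx]⟩
  · rintro ⟨hφ, hψmin⟩ y hy
    have hψy := abs_lt.1 (hψ y hy)
    rcases (hφ y hy).lt_or_eq with hlt | heq
    · linarith [hgap x hx y hy hlt]
    · linarith [hψmin y hy fun z hz => heq ▸ hφ z hz]

theorem Finset.inf'_eq_iff_isMinOn {β : Type*} [LinearOrder β] {S : Finset α} (hS : S.Nonempty)
    (φ : α → β) {x : α} (hx : x ∈ S) : φ x = S.inf' hS φ ↔ IsMinOn φ S x := by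
  rw [isMinOn_iff]
  exact ⟨fun h y hy => h ▸ S.inf'_le φ hy,
    fun h => le_antisymm (S.le_inf' hS φ h) (S.inf'_le φ hx)⟩

end Gap

namespace TropPlus

variable {n : ℕ}

noncomputable def wdot (w : Fin n → ℝ) (a : Fin n →₀ ℕ) : ℝ := ∑ i, w i * (a i : ℝ)

theorem wdot_add (w : Fin n → ℝ) (a b : Fin n →₀ ℕ) : wdot w (a + b) = wdot w a + wdot w b := by
  simp [wdot, mul_add, Finset.sum_add_distrib]

theorem wdot_sub_of_le (w : Fin n → ℝ) {a e : Fin n →₀ ℕ} (h : a ≤ e) :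
    wdot w (e - a) = wdot w e - wdot w a := by
  rw [eq_sub_iff_add_eq', ← wdot_add, add_tsub_cancel_of_le h]

theorem add_wdot (w η : Fin n → ℝ) (a : Fin n →₀ ℕ) : wdot (w + η) a = wdot w a + wdot η a := by
  simp [wdot, add_mul, Finset.sum_add_distrib]

theorem mWeight_eq (w : Fin n → ℝ) (f : MvPolynomial (Fin n) (HahnSeries ℚ ℂ)) (e : Fin n →₀ ℕ) :
    mWeight w f e = (f.coeff e).order + wdot w e :=
  rfl

theorem mWeight_add (w η : Fin n → ℝ) (f : MvPolynomial (Fin n) (HahnSeries ℚ ℂ)) :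
    mWeight (w + η) f = mWeight w f + wdot η := by
  ext e
  simp only [mWeight_eq, Pi.add_apply, add_wdot, add_assoc]

theorem mWeight_le_of_coeff_ne_zero (w : Fin n → ℝ) {f : MvPolynomial (Fin n) (HahnSeries ℚ ℂ)}
    {e : Fin n →₀ ℕ} {r : ℚ} (h : (f.coeff e).coeff r ≠ 0) :
    mWeight w f e ≤ r + wdot w e := by
  rw [mWeight_eq]
  gcongr
  exact_mod_cast HahnSeries.order_le_of_coeff_ne_zero h

open Classical in
theorem coeff_initForm (w : Fin n → ℝ) (f : MvPolynomial (Fin n) (HahnSeries ℚ ℂ))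
    (e : Fin n →₀ ℕ) :
    (initForm w f).coeff e =
      if e ∈ f.support ∧ IsMinOn (mWeight w f) f.support e then
        (f.coeff e).coeff (f.coeff e).order
      else 0 := by
  rcases eq_or_ne f 0 with rfl | hf
  · simp [initForm]
  rw [initForm, dif_neg hf, coeff_sum]
  simp only [coeff_monomial, Finset.sum_ite_eq', Finset.mem_filter]
  refine if_congr (and_congr_right fun he => ?_) rfl rfl
  exact Finset.inf'_eq_iff_isMinOn _ _ he

theorem mem_support_initForm (w : Fin n → ℝ) (f : MvPolynomial (Fin n) (HahnSeries ℚ ℂ))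
    (e : Fin n →₀ ℕ) :
    e ∈ (initForm w f).support ↔ e ∈ f.support ∧ IsMinOn (mWeight w f) f.support e := by
  rw [mem_support_iff, coeff_initForm]
  split_ifs with h
  · exact iff_of_true (HahnSeries.coeff_order_eq_zero.not.2 (mem_support_iff.1 h.1)) h
  · exact iff_of_false (not_not.2 rfl) h

open Classical in
theorem coeff_initFormC (η : Fin n → ℝ) (g : MvPolynomial (Fin n) ℂ) (e : Fin n →₀ ℕ) :
    (initFormC η g).coeff e =
      if e ∈ g.support ∧ IsMinOn (wdot η) g.support e then g.coeff e else 0 := by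
  rcases eq_or_ne g 0 with rfl | hg
  · simp [initFormC]
  rw [initFormC, dif_neg hg, coeff_sum]
  simp only [coeff_monomial, Finset.sum_ite_eq', Finset.mem_filter]
  refine if_congr (and_congr_right fun he => ?_) rfl rfl
  exact Finset.inf'_eq_iff_isMinOn _ (wdot η) he

theorem _root_.AllPosCoeffs.initFormC {g : MvPolynomial (Fin n) ℂ} (hg : AllPosCoeffs g)
    (η : Fin n → ℝ) : AllPosCoeffs (initFormC η g) := by
  obtain ⟨e, he, hmin⟩ := g.support.exists_min_image (wdot η) (support_nonempty.2 hg.1)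
  refine ⟨ne_zero_iff.2 ⟨e, ?_⟩, fun a ha => ?_⟩
  · rw [coeff_initFormC, if_pos ⟨he, isMinOn_iff.2 hmin⟩]
    exact mem_support_iff.1 he
  · rw [mem_support_iff, coeff_initFormC] at ha
    rw [coeff_initFormC]
    split_ifs at ha ⊢ with h
    · exact hg.2 a h.1
    · exact absurd rfl ha

theorem eventually_initForm_eq (w : Fin n → ℝ) (f : MvPolynomial (Fin n) (HahnSeries ℚ ℂ)) :
    ∀ᶠ w' in 𝓝 w, initForm w' f = initFormC (w' - w) (initForm w f) := by
  obtain ⟨γ, hγ, hgap⟩ := f.support.exists_pos_gap (mWeight w f)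
  have hsmall : ∀ᶠ w' in 𝓝 w, ∀ e ∈ f.support, |wdot (w' - w) e| < γ := by
    refine (eventually_all_finset _).2 fun e _ => ?_
    have : Tendsto (fun w' => wdot (w' - w) e) (𝓝 w) (𝓝 0) := by
      have hcont : Continuous fun w' => wdot (w' - w) e := by unfold wdot; fun_prop
      simpa [wdot] using hcont.tendsto w
    simpa [Real.dist_eq] using this.eventually (Metric.ball_mem_nhds 0 hγ)
  filter_upwards [hsmall] with w' hw'
  ext e
  have hweight : mWeight w' f = mWeight w f + wdot (w' - w) := by
    simpa using mWeight_add w (w' - w) f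
  rw [coeff_initForm, coeff_initFormC, coeff_initForm, hweight]
  have hsupp : ((initForm w f).support : Set (Fin n →₀ ℕ)) =
      {y ∈ (f.support : Set _) | IsMinOn (mWeight w f) f.support y} :=
    Set.ext fun y => mem_support_initForm w f y
  by_cases hmin : e ∈ (initForm w f).support ∧ IsMinOn (wdot (w' - w)) (initForm w f).support e
  · have he := (mem_support_initForm w f e).1 hmin.1
    rw [if_pos hmin, if_pos he,
      if_pos ⟨he.1, (isMinOn_add_iff_of_gap hgap hw' he.1).2 ⟨he.2, hsupp ▸ hmin.2⟩⟩]
  · rw [if_neg hmin, if_neg]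
    rintro ⟨he, h⟩
    obtain ⟨h₁, h₂⟩ := (isMinOn_add_iff_of_gap hgap hw' he).1 h
    exact hmin ⟨(mem_support_initForm w f e).2 ⟨he, h₁⟩, hsupp ▸ h₂⟩

section WeightPart

variable {w : Fin n → ℝ} {C : ℝ} {f g : MvPolynomial (Fin n) (HahnSeries ℚ ℂ)}

def InWeightClass (w : Fin n → ℝ) (C : ℝ) (e : Fin n →₀ ℕ) : Prop :=
  ∃ r : ℚ, (r : ℝ) + wdot w e = C

def WeightGE (w : Fin n → ℝ) (C : ℝ) (f : MvPolynomial (Fin n) (HahnSeries ℚ ℂ)) : Prop :=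
  ∀ e (r : ℚ), (r : ℝ) + wdot w e < C → (f.coeff e).coeff r = 0

open Classical in
/-- The terms `c t^r x^e` of `f` with `r + w·e = C`, evaluated at `t = 1`. -/
noncomputable def weightPart (w : Fin n → ℝ) (C : ℝ)
    (f : MvPolynomial (Fin n) (HahnSeries ℚ ℂ)) : MvPolynomial (Fin n) ℂ :=
  ∑ e ∈ f.support, monomial e (if h : InWeightClass w C e then (f.coeff e).coeff h.choose else 0)

open Classical in
theorem coeff_weightPart (e : Fin n →₀ ℕ) : (weightPart w C f).coeff e =
    if h : InWeightClass w C e then (f.coeff e).coeff h.choose else 0 := by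
  rw [weightPart, coeff_sum]
  simp only [coeff_monomial, Finset.sum_ite_eq', mem_support_iff, ite_not]
  split_ifs with h0 <;> simp [h0]

theorem coeff_weightPart_of_eq {e : Fin n →₀ ℕ} {r : ℚ} (h : (r : ℝ) + wdot w e = C) :
    (weightPart w C f).coeff e = (f.coeff e).coeff r := by
  have hc : InWeightClass w C e := ⟨r, h⟩
  have hr : hc.choose = r := by exact_mod_cast add_right_cancel (hc.choose_spec.trans h.symm)
  rw [coeff_weightPart, dif_pos hc, hr]

theorem coeff_weightPart_of_not {e : Fin n →₀ ℕ} (h : ¬InWeightClass w C e) :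
    (weightPart w C f).coeff e = 0 := by
  rw [coeff_weightPart, dif_neg h]

theorem weightPart_eq_of {P : MvPolynomial (Fin n) ℂ}
    (h₁ : ∀ e (r : ℚ), (r : ℝ) + wdot w e = C → (f.coeff e).coeff r = P.coeff e)
    (h₀ : ∀ e, ¬InWeightClass w C e → P.coeff e = 0) : weightPart w C f = P := by
  ext e
  by_cases hc : InWeightClass w C e
  · obtain ⟨r, hr⟩ := hc
    rw [coeff_weightPart_of_eq hr, h₁ e r hr]
  · rw [coeff_weightPart_of_not hc, h₀ e hc]

theorem weightPart_zero : weightPart w C (0 : MvPolynomial (Fin n) (HahnSeries ℚ ℂ)) = 0 :=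
  weightPart_eq_of (by simp) (by simp)

theorem weightPart_add : weightPart w C (f + g) = weightPart w C f + weightPart w C g :=
  weightPart_eq_of (fun _ _ h => by simp [coeff_weightPart_of_eq h])
    (fun _ h => by simp [coeff_weightPart_of_not h])

theorem weightPart_monomial_mul (a : Fin n →₀ ℕ) (q : ℚ) (c : ℂ) :
    weightPart w (C + q + wdot w a) (monomial a (HahnSeries.single q c) * f) =
      monomial a c * weightPart w C f := by
  refine weightPart_eq_of (fun e r hr => ?_) (fun e he => ?_)
  · rw [coeff_monomial_mul', coeff_monomial_mul']
    split_ifs with hae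
    · rw [HahnSeries.coeff_single_mul, coeff_weightPart_of_eq (r := r - q)]
      push_cast
      rw [wdot_sub_of_le w hae]
      linarith
    · exact HahnSeries.coeff_zero
  · rw [coeff_monomial_mul']
    split_ifs with hae
    · rw [coeff_weightPart_of_not, mul_zero]
      rintro ⟨r, hr⟩
      refine he ⟨r + q, ?_⟩
      push_cast
      rw [wdot_sub_of_le w hae] at hr
      linarith
    · rfl

theorem weightGE_zero : WeightGE w C (0 : MvPolynomial (Fin n) (HahnSeries ℚ ℂ)) :=
  fun _ _ _ => by simp

theorem WeightGE.add (hf : WeightGE w C f) (hg : WeightGE w C g) : WeightGE w C (f + g) :=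
  fun e r h => by simp [hf e r h, hg e r h]

theorem WeightGE.monomial_mul (hf : WeightGE w C f) (a : Fin n →₀ ℕ) (q : ℚ) (c : ℂ) :
    WeightGE w (C + q + wdot w a) (monomial a (HahnSeries.single q c) * f) := by
  intro e r hr
  rw [coeff_monomial_mul']
  split_ifs with hae
  · rw [HahnSeries.coeff_single_mul, hf (e - a) (r - q), mul_zero]
    push_cast
    rw [wdot_sub_of_le w hae]
    linarith
  · exact HahnSeries.coeff_zero

theorem weightGE_of_isMinOn {e₀ : Fin n →₀ ℕ}
    (hmin : IsMinOn (mWeight w f) f.support e₀) : WeightGE w (mWeight w f e₀) f := by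
  intro e r hr
  by_contra h
  have he : e ∈ f.support := mem_support_iff.2 fun h0 => h (by simp [h0])
  linarith [mWeight_le_of_coeff_ne_zero w h, isMinOn_iff.1 hmin e he]

theorem initForm_eq_weightPart {e₀ : Fin n →₀ ℕ} (he₀ : e₀ ∈ f.support)
    (hmin : IsMinOn (mWeight w f) f.support e₀) :
    initForm w f = weightPart w (mWeight w f e₀) f := by
  have hmin_iff : ∀ e ∈ f.support,
      IsMinOn (mWeight w f) f.support e ↔ mWeight w f e = mWeight w f e₀ := fun e he =>
    ⟨fun h => le_antisymm (isMinOn_iff.1 h e₀ he₀) (isMinOn_iff.1 hmin e he),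
      fun h => isMinOn_iff.2 fun y hy => h ▸ isMinOn_iff.1 hmin y hy⟩
  refine (weightPart_eq_of (fun e r hr => ?_) (fun e he => ?_)).symm
  · rw [coeff_initForm]
    by_cases hr0 : (f.coeff e).coeff r = 0
    · split_ifs with h
      · rw [hmin_iff e h.1, mWeight_eq, ← hr, add_left_inj] at h
        rw [Rat.cast_injective h.2, hr0]
      · exact hr0
    · have he : e ∈ f.support := mem_support_iff.2 fun h0 => hr0 (by simp [h0])
      have hle := mWeight_le_of_coeff_ne_zero w hr0
      have hweight : mWeight w f e = mWeight w f e₀ :=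
        le_antisymm (hr ▸ hle) (isMinOn_iff.1 hmin e he)
      have hord : (f.coeff e).order = r := by
        rw [mWeight_eq, ← hr, add_left_inj] at hweight
        exact Rat.cast_injective hweight
      rw [if_pos ⟨he, (hmin_iff e he).2 hweight⟩, hord]
  · rw [coeff_initForm, if_neg]
    rintro ⟨he', hmin'⟩
    exact he ⟨_, (hmin_iff e he').1 hmin'⟩

theorem initForm_eq_weightPart_of_weightGE (hC : WeightGE w C f) (h0 : weightPart w C f ≠ 0) :
    initForm w f = weightPart w C f := by
  obtain ⟨e₀, he₀⟩ := ne_zero_iff.1 h0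
  obtain ⟨r, hr⟩ : InWeightClass w C e₀ := by
    by_contra h
    exact he₀ (coeff_weightPart_of_not h)
  rw [coeff_weightPart_of_eq hr] at he₀
  have hmem : e₀ ∈ f.support := mem_support_iff.2 fun h => he₀ (by simp [h])
  have hlow : ∀ e ∈ f.support, C ≤ mWeight w f e := fun e he => by
    by_contra! h
    exact HahnSeries.coeff_order_eq_zero.not.2 (mem_support_iff.1 he) (hC e _ h)
  have hweight : mWeight w f e₀ = C :=
    le_antisymm (hr ▸ mWeight_le_of_coeff_ne_zero w he₀) (hlow e₀ hmem)
  rw [initForm_eq_weightPart hmem (isMinOn_iff.2 fun e he => hweight ▸ hlow e he), hweight]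

open Classical in
noncomputable def classPart (w : Fin n → ℝ) (C : ℝ) (g : MvPolynomial (Fin n) ℂ) :
    MvPolynomial (Fin n) ℂ :=
  ∑ e ∈ g.support with InWeightClass w C e, monomial e (g.coeff e)

open Classical in
theorem coeff_classPart (g : MvPolynomial (Fin n) ℂ) (e : Fin n →₀ ℕ) :
    (classPart w C g).coeff e = if InWeightClass w C e then g.coeff e else 0 := by
  rw [classPart, coeff_sum]
  simp only [coeff_monomial, Finset.sum_ite_eq', Finset.mem_filter, mem_support_iff]
  split_ifs <;> tauto

theorem classPart_zero : classPart w C 0 = 0 := by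
  ext e; simp [coeff_classPart]

theorem classPart_add (P Q : MvPolynomial (Fin n) ℂ) :
    classPart w C (P + Q) = classPart w C P + classPart w C Q := by
  ext e; simp only [coeff_classPart, coeff_add]; split_ifs <;> simp

theorem classPart_monomial_mul (a : Fin n →₀ ℕ) (c : ℂ) (P : MvPolynomial (Fin n) ℂ) :
    classPart w (C + wdot w a) (monomial a c * P) = monomial a c * classPart w C P := by
  ext e
  simp only [coeff_classPart, coeff_monomial_mul']
  by_cases hae : a ≤ e
  · have hiff : InWeightClass w (C + wdot w a) e ↔ InWeightClass w C (e - a) := by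
      simp only [InWeightClass, wdot_sub_of_le w hae]
      exact exists_congr fun r => by constructor <;> intro h <;> linarith
    by_cases h : InWeightClass w C (e - a) <;> simp [hae, h, hiff]
  · simp [hae]

open Classical in
theorem classPart_weightPart (C' : ℝ) (f : MvPolynomial (Fin n) (HahnSeries ℚ ℂ)) :
    classPart w C (weightPart w C' f) =
      if ∃ q : ℚ, C' + q = C then weightPart w C' f else 0 := by
  ext e
  rw [coeff_classPart]
  by_cases hC' : InWeightClass w C' e
  · obtain ⟨r, hr⟩ := hC'
    have hiff : InWeightClass w C e ↔ ∃ q : ℚ, C' + q = C :=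
      ⟨fun ⟨s, hs⟩ => ⟨s - r, by push_cast; linarith⟩,
        fun ⟨q, hq⟩ => ⟨r + q, by push_cast; linarith⟩⟩
    simp only [hiff]
    split_ifs <;> rfl
  · rw [coeff_weightPart_of_not hC']
    split_ifs <;> simp [coeff_weightPart_of_not hC']

theorem _root_.AllPosCoeffs.classPart {g : MvPolynomial (Fin n) ℂ} (hg : AllPosCoeffs g)
    {e : Fin n →₀ ℕ} (he : e ∈ g.support) (hC : InWeightClass w C e) :
    AllPosCoeffs (classPart w C g) := by
  refine ⟨ne_zero_iff.2 ⟨e, ?_⟩, fun a ha => ?_⟩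
  · rw [coeff_classPart, if_pos hC]
    exact mem_support_iff.1 he
  · rw [mem_support_iff, coeff_classPart] at ha
    rw [coeff_classPart]
    split_ifs at ha ⊢ with h
    · exact hg.2 a (mem_support_iff.2 ha)
    · exact absurd rfl ha

variable {I : Ideal (MvPolynomial (Fin n) (HahnSeries ℚ ℂ))} {P Q : MvPolynomial (Fin n) ℂ}

def IsWeightPartOf (w : Fin n → ℝ) (I : Ideal (MvPolynomial (Fin n) (HahnSeries ℚ ℂ))) (C : ℝ)
    (P : MvPolynomial (Fin n) ℂ) : Prop :=
  ∃ f ∈ I, WeightGE w C f ∧ weightPart w C f = P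

theorem isWeightPartOf_zero : IsWeightPartOf w I C 0 :=
  ⟨0, I.zero_mem, weightGE_zero, weightPart_zero⟩

theorem IsWeightPartOf.add (hP : IsWeightPartOf w I C P) (hQ : IsWeightPartOf w I C Q) :
    IsWeightPartOf w I C (P + Q) := by
  obtain ⟨f, hfI, hf, rfl⟩ := hP
  obtain ⟨g, hgI, hg, rfl⟩ := hQ
  exact ⟨f + g, I.add_mem hfI hgI, hf.add hg, weightPart_add⟩

theorem IsWeightPartOf.monomial_mul (hP : IsWeightPartOf w I C P) (a : Fin n →₀ ℕ) (q : ℚ)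
    (c : ℂ) : IsWeightPartOf w I (C + q + wdot w a) (monomial a c * P) := by
  obtain ⟨f, hfI, hf, rfl⟩ := hP
  exact ⟨_, I.mul_mem_left _ hfI, hf.monomial_mul a q c, weightPart_monomial_mul a q c⟩

theorem isWeightPartOf_classPart_initForm {F : MvPolynomial (Fin n) (HahnSeries ℚ ℂ)}
    (hF : F ∈ I) (C : ℝ) : IsWeightPartOf w I C (classPart w C (initForm w F)) := by
  rcases eq_or_ne F 0 with rfl | hF0
  · rw [initForm, dif_pos rfl, classPart_zero]
    exact isWeightPartOf_zero
  obtain ⟨e₀, he₀, hmin⟩ := F.support.exists_min_image (mWeight w F) (support_nonempty.2 hF0)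
  rw [initForm_eq_weightPart he₀ (isMinOn_iff.2 hmin), classPart_weightPart]
  split_ifs with hq
  · obtain ⟨q, rfl⟩ := hq
    have h := IsWeightPartOf.monomial_mul
      ⟨F, hF, weightGE_of_isMinOn (isMinOn_iff.2 hmin), rfl⟩ 0 q 1
    simpa [wdot] using h
  · exact isWeightPartOf_zero

theorem isWeightPartOf_classPart (hP : P ∈ initIdeal w I) (C : ℝ) :
    IsWeightPartOf w I C (classPart w C P) := by
  induction hP using Submodule.span_induction generalizing C with
  | mem x hx =>
    obtain ⟨F, hF, rfl⟩ := hx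
    exact isWeightPartOf_classPart_initForm hF C
  | zero => rw [classPart_zero]; exact isWeightPartOf_zero
  | add x y _ _ hx hy => exact classPart_add x y ▸ (hx C).add (hy C)
  | smul p x _ hx =>
    induction p using MvPolynomial.induction_on' generalizing C with
    | monomial a c =>
      have h := (hx (C - wdot w a)).monomial_mul a 0 c
      rwa [Rat.cast_zero, add_zero, sub_add_cancel, ← classPart_monomial_mul, sub_add_cancel]
        at h
    | add p q hp hq =>
      rw [add_smul, classPart_add]
      exact (hp C).add (hq C)

theorem exists_mem_allPosCoeffs_initForm {g : MvPolynomial (Fin n) ℂ} (hg : g ∈ initIdeal w I)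
    (hpos : AllPosCoeffs g) : ∃ f ∈ I, AllPosCoeffs (initForm w f) := by
  obtain ⟨e₀, he₀⟩ := support_nonempty.2 hpos.1
  have hclass : InWeightClass w (wdot w e₀) e₀ := ⟨0, by simp⟩
  obtain ⟨f, hfI, hf, hpart⟩ := isWeightPartOf_classPart hg (wdot w e₀)
  have hpos' := hpos.classPart he₀ hclass
  rw [← hpart] at hpos'
  exact ⟨f, hfI, initForm_eq_weightPart_of_weightGE hf hpos'.1 ▸ hpos'⟩

end WeightPart

end TropPlus

open TropPlus in
/-- The positive tropical variety `Trop⁺ V(I)` is a closed subset of `ℝⁿ`: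
the set of weight vectors `w` such that the initial ideal `in_w(I)` contains
no nonzero polynomial with all positive real coefficients is closed. -/
theorem tropPlus_isClosed {n : ℕ}
    (I : Ideal (MvPolynomial (Fin n) (HahnSeries ℚ ℂ))) :
    IsClosed {w : Fin n → ℝ | ¬∃ g ∈ initIdeal w I, AllPosCoeffs g} := by
  rw [← isOpen_compl_iff, isOpen_iff_eventually]
  intro w hw
  simp only [Set.mem_compl_iff, Set.mem_ofPred_eq, not_not] at hw ⊢
  obtain ⟨g, hg, hpos⟩ := hw
  obtain ⟨f, hfI, hf⟩ := exists_mem_allPosCoeffs_initForm hg hpos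
  filter_upwards [eventually_initForm_eq w f] with w' hw'
  exact ⟨initForm w' f, Ideal.subset_span ⟨f, hfI, rfl⟩, hw' ▸ hf.initFormC (w' - w)⟩
end

section
/- The map Ψ is a left inverse of Φ₁: for any assignment x of positive reals to the regions of Web_{k,n}, applying Ψ to the matrix A_{k,n}(x) recovers x; i.e., for every region (i,j), (P_{K(i,j)}(x)·P_{K(i+1,j−2)}(x)·P_{K(i+2,j−1)}(x)) / (P_{K(i,j−1)}(x)·P_{K(i+1,j)}(x)·P_{K(i+2,j−2)}(x)) = x_{(i,j)}. -/
/-!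
For a region `(r, c)` put `m = min (k - r) (n - k - c)`. The sources of `K(r, c)` are the rows
`r, …, r + m - 1` and its admissible sinks the columns `c, …, c + m - 1`. In a disjoint family
the paths from consecutive sources start descending in strictly increasing columns, and distinct
paths have distinct sinks; counting then forces the path from row `r + t` to run straight down
column `c + t`. So `P_{K(r,c)} = D(r, c)` (`diagProd`), the product over `t < m` of the products
`R(r + t, c + t)` (`rectProd`) of the region variables in `[r + t, k) × [c + t, n - k)`, whence
`D(r, c) = R(r, c) D(r + 1, c + 1)`. The ratio in the theorem telescopes to
`R(r, c) R(r + 1, c + 1) / (R(r, c + 1) R(r + 1, c))`, and this is `x r c`.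
-/

/-- A directed path in the web diagram `Web_{k,nk+k}` (a `k × nk` grid with
sources entering on the right of each row and sinks leaving at the bottom of
each column; rows are indexed `0,…,k-1` from top to bottom and columns
`0,…,nk-1` from left to right).  The path enters row `src` from the right,
moves left and down, descending from row `r` to row `r+1` at column `d r`, and
exits at the bottom of column `d (k-1)`.  The descent function is normalized to
be constant outside the interval `[src, k-1]`. -/
structure WebPath (k nk : ℕ) : Type where
  src : ℕ
  d : ℕ → ℕ
  src_lt : src < k
  d_lt : ∀ r, d r < nk
  anti : ∀ ⦃r s : ℕ⦄, r ≤ s → d s ≤ d r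
  low : ∀ r ≤ src, d r = d src
  high : ∀ r, k - 1 ≤ r → d r = d (k - 1)

namespace WebPath

/-- The column of the sink at which the path exits. -/
def sink {k nk : ℕ} (p : WebPath k nk) : ℕ := p.d (k - 1)

/-- The set of grid vertices `(row, column)` visited by the path. -/
def vertexSet {k nk : ℕ} (p : WebPath k nk) : Set (ℕ × ℕ) :=
  {v | p.src ≤ v.1 ∧ v.1 < k ∧ p.d v.1 ≤ v.2 ∧
    v.2 ≤ (if v.1 = p.src then nk - 1 else p.d (v.1 - 1))}

/-- The product of the edge variables along the path, where `xh r c` is the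
variable of the horizontal edge entering vertex `(r, c)` from the right and
`xv r c` is the variable of the vertical edge leaving vertex `(r, c)`
downwards. -/
def edgeProd {k nk : ℕ} {R : Type*} [CommSemiring R] (p : WebPath k nk)
    (xh xv : ℕ → ℕ → R) : R :=
  (∏ c ∈ Finset.Icc (p.d p.src) (nk - 1), xh p.src c) *
    (∏ r ∈ Finset.Ioc p.src (k - 1),
      ∏ c ∈ Finset.Ico (p.d r) (p.d (r - 1)), xh r c) *
    (∏ r ∈ Finset.Icc p.src (k - 1), xv r (p.d r))

/-- The product of the region variables of all regions lying below the path,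
where `x r c` is the variable of the region between vertex rows `r` and `r+1`
lying to the right of vertex column `c`. -/
def regionProd {k nk : ℕ} {R : Type*} [CommSemiring R] (p : WebPath k nk)
    (x : ℕ → ℕ → R) : R :=
  ∏ r ∈ Finset.Icc p.src (k - 1), ∏ c ∈ Finset.Icc (p.d r) (nk - 1), x r c

end WebPath

/-- A family of pairwise vertex-disjoint paths in `Web_{k,n}` from the source
set `[k] \ (K ∩ [k])` to the sink set `K \ (K ∩ [k])`, for a `k`-element subset
`K` of the (`0`-indexed) boundary labels `{0,…,n-1}`; the sink exiting at the
bottom of column `c` has label `n - 1 - c`. -/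
structure DisjointFamily (k n : ℕ) (K : Finset ℕ) : Type where
  F : (i : Fin k) → (i : ℕ) ∉ K → WebPath k (n - k)
  src_eq : ∀ i h, (F i h).src = (i : ℕ)
  sink_mem : ∀ i h, n - 1 - (F i h).sink ∈ K
  sink_inj : ∀ i h i' h', (F i h).sink = (F i' h').sink → i = i'
  disj : ∀ i h i' h', i ≠ i' →
    Disjoint (F i h).vertexSet (F i' h').vertexSet

/-- The product of the edge weights over all the paths of a disjoint path
family. -/
def DisjointFamily.edgeWeight {k n : ℕ} {K : Finset ℕ} {R : Type*}
    [CommSemiring R] (Fam : DisjointFamily k n K) (xh xv : ℕ → ℕ → R) : R :=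
  ∏ i : Fin k, if h : (i : ℕ) ∉ K then (Fam.F i h).edgeProd xh xv else 1

/-- The matrix `A_{k,n}(x)`: its first `k` columns form the identity matrix,
and for a column `j ≥ k` the entry in row `i` is `(-1)^i` times the sum of the
products of the edge weights over all directed paths from source `i` to the
sink labeled `j` (which exits at the bottom of column `n - 1 - j`). -/
noncomputable def webMatrix (k n : ℕ) {R : Type*} [CommRing R]
    (xh xv : ℕ → ℕ → R) : Matrix (Fin k) (Fin n) R :=
  fun i j =>
    if (j : ℕ) < k then (if (i : ℕ) = (j : ℕ) then 1 else 0)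
    else (-1) ^ (i : ℕ) *
      ∑ᶠ p : {p : WebPath k (n - k) //
          p.src = (i : ℕ) ∧ p.sink = n - 1 - (j : ℕ)},
        (p : WebPath k (n - k)).edgeProd xh xv

/-- The product of the region weights over all the paths of a disjoint path
family, where `x r c` is the variable of the region in row `r` to the right of
column `c`. -/
def DisjointFamily.regionWeight {k n : ℕ} {K : Finset ℕ}
    (Fam : DisjointFamily k n K) (x : ℕ → ℕ → ℝ) : ℝ :=
  ∏ i : Fin k, if h : (i : ℕ) ∉ K then (Fam.F i h).regionProd x else 1

/-- The Plücker coordinate `P_K(x)` of the point `Φ₁(x)` of the totally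
positive Grassmannian, as a function of the region variables: the sum over all
pairwise vertex-disjoint path families for `K` of the products of the region
variables below the paths.  By convention `P_∅ = 1`. -/
noncomputable def webP (k n : ℕ) (x : ℕ → ℕ → ℝ) (K : Finset ℕ) : ℝ :=
  if K = ∅ then 1
  else ∑ᶠ Fam : DisjointFamily k n K, Fam.regionWeight x

/-- The index set `K(i,j)` attached to the region of `Web_{k,n}` in (`0`-indexed)
cell coordinates `(r, c)` (row `r`, to the right of column `c`); this is the
`0`-indexed version of `K(i,j) = {1,…,i-1} ∪ {i+j-k,…,j}`, and it is `∅` when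
`(r,c)` is not a region. -/
def regionK (k n r c : ℕ) : Finset ℕ :=
  if r < k ∧ c < n - k then
    Finset.range r ∪ Finset.Icc (r + (n - k) - c) (n - 1 - c)
  else ∅

open Finset

theorem add_le_apply_add_of_lt_succ {f : ℕ → ℕ} {m : ℕ}
    (hf : ∀ t, t + 1 < m → f t < f (t + 1)) {t s : ℕ} (h : t + s < m) :
    f t + s ≤ f (t + s) := by
  induction s with
  | zero => simp
  | succ s ih =>
    have hstep := hf (t + s) (by omega)
    have hprev := ih (by omega)
    rw [← add_assoc t s 1]
    omega

theorem apply_eq_add_of_lt_succ {f : ℕ → ℕ} {m c : ℕ}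
    (hf : ∀ t, t + 1 < m → f t < f (t + 1)) (hfirst : c ≤ f 0) (hlast : f (m - 1) < c + m)
    {t : ℕ} (ht : t < m) : f t = c + t := by
  have hlow := add_le_apply_add_of_lt_succ hf (t := 0) (s := t) (by omega)
  have hup := add_le_apply_add_of_lt_succ hf (t := t) (s := m - 1 - t) (by omega)
  rw [zero_add] at hlow
  rw [show t + (m - 1 - t) = m - 1 by omega] at hup
  omega

theorem apply_eq_add_of_injOn_of_le {f : ℕ → ℕ} {m c : ℕ} (hinj : Set.InjOn f (Set.Iio m))
    (hlow : ∀ t < m, c ≤ f t) (hup : ∀ t < m, f t ≤ c + t) {t : ℕ} (ht : t < m) :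
    f t = c + t := by
  induction t using Nat.strong_induction_on with
  | _ t ih =>
    have hlow_t := hlow t ht
    have hup_t := hup t ht
    by_contra hne
    have hprev := ih (f t - c) (by omega) (by omega)
    have heq := hinj (Set.mem_Iio.mpr (by omega : f t - c < m)) ht (by omega)
    omega

def rectProd (k nk : ℕ) (x : ℕ → ℕ → ℝ) (a b : ℕ) : ℝ :=
  ∏ ρ ∈ Ico a k, ∏ col ∈ Ico b nk, x ρ col

def diagProd (k nk : ℕ) (x : ℕ → ℕ → ℝ) (a b : ℕ) : ℝ :=
  ∏ t ∈ range (min (k - a) (nk - b)), rectProd k nk x (a + t) (b + t)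

section rectProd
variable {k nk : ℕ} (x : ℕ → ℕ → ℝ)

theorem rectProd_pos (hx : ∀ r c, 0 < x r c) (a b : ℕ) : 0 < rectProd k nk x a b :=
  prod_pos fun _ _ => prod_pos fun _ _ => hx _ _

theorem diagProd_pos (hx : ∀ r c, 0 < x r c) (a b : ℕ) : 0 < diagProd k nk x a b :=
  prod_pos fun _ _ => rectProd_pos x hx _ _

theorem rectProd_mul_rectProd_succ {a b : ℕ} (ha : a < k) (hb : b < nk) :
    rectProd k nk x a b * rectProd k nk x (a + 1) (b + 1) =
      x a b * (rectProd k nk x a (b + 1) * rectProd k nk x (a + 1) b) := by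
  simp only [rectProd, prod_eq_prod_Ico_succ_bot ha, prod_eq_prod_Ico_succ_bot hb]
  ring

theorem diagProd_eq_rectProd_mul (a b : ℕ) :
    diagProd k nk x a b = rectProd k nk x a b * diagProd k nk x (a + 1) (b + 1) := by
  by_cases hab : a < k ∧ b < nk
  · rw [diagProd, diagProd,
      show min (k - a) (nk - b) = min (k - (a + 1)) (nk - (b + 1)) + 1 by omega,
      prod_range_succ', mul_comm]
    simp only [add_zero, add_assoc, add_comm 1]
  · rw [diagProd, diagProd, show min (k - a) (nk - b) = 0 by omega,
      show min (k - (a + 1)) (nk - (b + 1)) = 0 by omega]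
    rcases not_and_or.mp hab with ha | hb
    · simp [rectProd, Ico_eq_empty_of_le (not_lt.mp ha)]
    · simp [rectProd, Ico_eq_empty_of_le (not_lt.mp hb)]

end rectProd

namespace WebPath
variable {k nk : ℕ}

@[ext]
theorem ext {p q : WebPath k nk} (hsrc : p.src = q.src) (hd : p.d = q.d) : p = q := by
  cases p; cases q; cases hsrc; cases hd; rfl

def const (k nk i a : ℕ) (hi : i < k) (ha : a < nk) : WebPath k nk where
  src := i
  d _ := a
  src_lt := hi
  d_lt _ := ha
  anti _ _ _ := le_rfl
  low _ _ := rfl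
  high _ _ := rfl

theorem regionProd_const (x : ℕ → ℕ → ℝ) {i a : ℕ} (hi : i < k) (ha : a < nk) :
    (const k nk i a hi ha).regionProd x = rectProd k nk x i a := by
  have hIcc : ∀ {b m : ℕ}, b < m → Icc b (m - 1) = Ico b m := fun _ => by
    ext; simp only [mem_Icc, mem_Ico]; omega
  simp only [regionProd, rectProd, const, hIcc hi, hIcc ha]

theorem disjoint_const {i a i' a' : ℕ} (hi : i < k) (ha : a < nk) (hi' : i' < k) (ha' : a' < nk)
    (hii' : i < i') (haa' : a < a') :
    Disjoint (const k nk i a hi ha).vertexSet (const k nk i' a' hi' ha').vertexSet := by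
  refine Set.disjoint_left.mpr fun v hv hv' => ?_
  simp only [vertexSet, const, Set.mem_ofPred_eq] at hv hv'
  simp only [show v.1 ≠ i by omega, ↓reduceIte] at hv
  omega

theorem sink_le_d (p : WebPath k nk) (ρ : ℕ) : p.sink ≤ p.d ρ := by
  rcases le_total ρ (k - 1) with h | h
  · exact p.anti h
  · exact (p.high ρ h).ge

theorem d_eq_sink_of_d_src_le (p : WebPath k nk) (h : p.d p.src ≤ p.sink) (ρ : ℕ) :
    p.d ρ = p.sink := by
  refine le_antisymm ?_ (p.sink_le_d ρ)
  rcases le_total ρ p.src with hρ | hρ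
  · exact (p.low ρ hρ).trans_le h
  · exact (p.anti hρ).trans h

theorem d_src_lt_of_disjoint {p q : WebPath k nk} (hpq : Disjoint p.vertexSet q.vertexSet)
    (hsrc : q.src = p.src + 1) : p.d p.src < q.d q.src := by
  by_contra! hle
  have hq := q.src_lt
  have hlt := p.d_lt p.src
  have hanti := p.anti (show p.src ≤ q.src by omega)
  have hp : (q.src, p.d p.src) ∈ p.vertexSet := by
    simp only [vertexSet, Set.mem_ofPred_eq, if_neg (show q.src ≠ p.src by omega),
      show q.src - 1 = p.src by omega]
    omega
  have hq : (q.src, p.d p.src) ∈ q.vertexSet := by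
    simp only [vertexSet, Set.mem_ofPred_eq, ↓reduceIte]
    omega
  exact Set.disjoint_left.mp hpq hp hq

end WebPath

section regionK
variable {k n r c : ℕ}

theorem regionK_of_lt (hr : r < k) (hc : c < n - k) :
    regionK k n r c = range r ∪ Icc (r + (n - k) - c) (n - 1 - c) :=
  if_pos ⟨hr, hc⟩

theorem notMem_regionK_iff (hr : r < k) (hc : c < n - k) {i : ℕ} (hi : i < k) :
    i ∉ regionK k n r c ↔ r ≤ i ∧ i < r + min (k - r) (n - k - c) := by
  simp only [regionK_of_lt hr hc, mem_union, mem_range, mem_Icc]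
  omega

theorem sub_mem_regionK_iff (hr : r < k) (hc : c < n - k) {s : ℕ} (hs : s < n - k) :
    n - 1 - s ∈ regionK k n r c ↔ c ≤ s ∧ s < c + min (k - r) (n - k - c) := by
  simp only [regionK_of_lt hr hc, mem_union, mem_range, mem_Icc]
  omega

theorem add_notMem_regionK {t : ℕ} (ht : t < min (k - r) (n - k - c)) :
    r + t ∉ regionK k n r c :=
  (notMem_regionK_iff (by omega) (by omega) (by omega)).mpr (by omega)

def canonicalFamily (hr : r < k) (hc : c < n - k) : DisjointFamily k n (regionK k n r c) where
  F i h := WebPath.const k (n - k) i (c + (i - r)) i.isLt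
    (by have := (notMem_regionK_iff hr hc i.isLt).mp h; omega)
  src_eq _ _ := rfl
  sink_mem i h := by
    have := (notMem_regionK_iff hr hc i.isLt).mp h
    show n - 1 - (c + (i - r)) ∈ _
    exact (sub_mem_regionK_iff hr hc (by omega)).mpr (by omega)
  sink_inj i h i' h' hsink := by
    have := (notMem_regionK_iff hr hc i.isLt).mp h
    have := (notMem_regionK_iff hr hc i'.isLt).mp h'
    have : c + (i - r) = c + (i' - r) := hsink
    exact Fin.ext (by omega)
  disj i h i' h' hii' := by
    have := (notMem_regionK_iff hr hc i.isLt).mp h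
    have := (notMem_regionK_iff hr hc i'.isLt).mp h'
    rcases Fin.lt_or_lt_of_ne hii' with hlt | hlt
    · exact WebPath.disjoint_const _ _ _ _ hlt (by omega)
    · exact (WebPath.disjoint_const _ _ _ _ hlt (by omega)).symm

namespace DisjointFamily

@[ext]
theorem ext {K : Finset ℕ} {A B : DisjointFamily k n K} (h : ∀ i hi, A.F i hi = B.F i hi) :
    A = B := by
  cases A; cases B
  obtain rfl : _ = _ := funext fun i => funext (h i)
  rfl

variable (Fam : DisjointFamily k n (regionK k n r c)) {t t' : ℕ}

def path (t : ℕ) (ht : t < min (k - r) (n - k - c)) : WebPath k (n - k) :=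
  Fam.F ⟨r + t, by omega⟩ (add_notMem_regionK ht)

theorem path_src (ht : t < min (k - r) (n - k - c)) : (Fam.path t ht).src = r + t :=
  Fam.src_eq _ _

theorem disjoint_path (ht : t < min (k - r) (n - k - c)) (ht' : t' < min (k - r) (n - k - c))
    (htt' : t ≠ t') : Disjoint (Fam.path t ht).vertexSet (Fam.path t' ht').vertexSet :=
  Fam.disj _ _ _ _ (by simpa [Fin.ext_iff] using htt')

theorem path_sink_mem (ht : t < min (k - r) (n - k - c)) :
    c ≤ (Fam.path t ht).sink ∧ (Fam.path t ht).sink < c + min (k - r) (n - k - c) :=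
  (sub_mem_regionK_iff (by omega) (by omega) ((Fam.path t ht).d_lt _)).mp (Fam.sink_mem _ _)

theorem path_sink_injective (ht : t < min (k - r) (n - k - c))
    (ht' : t' < min (k - r) (n - k - c)) (h : (Fam.path t ht).sink = (Fam.path t' ht').sink) :
    t = t' := by
  simpa [Fin.ext_iff] using Fam.sink_inj _ _ _ _ h

theorem path_d_src_lt_succ (ht : t + 1 < min (k - r) (n - k - c)) :
    (Fam.path t (by omega)).d (r + t) < (Fam.path (t + 1) ht).d (r + (t + 1)) := by
  have hlt := WebPath.d_src_lt_of_disjoint (Fam.disjoint_path (t := t) (by omega) ht (by omega))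
    (by rw [path_src, path_src, add_assoc])
  rwa [path_src, path_src] at hlt

theorem path_d_src (ht : t < min (k - r) (n - k - c)) : (Fam.path t ht).d (r + t) = c + t := by
  have key := apply_eq_add_of_lt_succ (c := c)
    (f := fun t => if ht : t < min (k - r) (n - k - c) then (Fam.path t ht).d (r + t) else 0)
    (fun s hs => ?_) ?_ ?_ ht
  · simpa only [dif_pos ht] using key
  · simpa only [dif_pos (show s < min (k - r) (n - k - c) by omega), dif_pos hs]
      using Fam.path_d_src_lt_succ hs
  · simp only [dif_pos (show 0 < min (k - r) (n - k - c) by omega)]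
    exact (Fam.path_sink_mem _).1.trans (WebPath.sink_le_d _ _)
  · have hlast : min (k - r) (n - k - c) - 1 < min (k - r) (n - k - c) := by omega
    simp only [dif_pos hlast]
    have hlt := (Fam.path _ hlast).d_lt (r + (min (k - r) (n - k - c) - 1))
    have hsink := (Fam.path_sink_mem hlast).2
    -- the last source lies in the bottom row, or its path starts in the last column
    rcases (by omega : r + (min (k - r) (n - k - c) - 1) = k - 1 ∨
      min (k - r) (n - k - c) = n - k - c) with hbottom | hm
    · rw [hbottom]
      exact hsink
    · omega

theorem path_sink (ht : t < min (k - r) (n - k - c)) : (Fam.path t ht).sink = c + t := by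
  have key := apply_eq_add_of_injOn_of_le (c := c)
    (f := fun t => if ht : t < min (k - r) (n - k - c) then (Fam.path t ht).sink else 0)
    (fun s hs s' hs' h => ?_) (fun s hs => ?_) (fun s hs => ?_) ht
  · simpa only [dif_pos ht] using key
  · rw [Set.mem_Iio] at hs hs'
    simp only [dif_pos hs, dif_pos hs'] at h
    exact Fam.path_sink_injective hs hs' h
  · simpa only [dif_pos hs] using (Fam.path_sink_mem hs).1
  · have hle := (Fam.path s hs).sink_le_d (r + s)
    rw [Fam.path_d_src hs] at hle
    simpa only [dif_pos hs] using hle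

theorem path_d (ht : t < min (k - r) (n - k - c)) (ρ : ℕ) : (Fam.path t ht).d ρ = c + t := by
  rw [WebPath.d_eq_sink_of_d_src_le _ (by rw [path_src, path_d_src, path_sink]), path_sink]

theorem eq_canonicalFamily (hr : r < k) (hc : c < n - k) : Fam = canonicalFamily hr hc := by
  refine DisjointFamily.ext fun ⟨i, hi⟩ h => ?_
  have hsrc := (notMem_regionK_iff hr hc hi).mp h
  obtain ⟨t, rfl⟩ := Nat.exists_eq_add_of_le hsrc.1
  change Fam.path t (by omega) = _
  refine WebPath.ext (Fam.path_src _) (funext fun ρ => ?_)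
  rw [Fam.path_d]
  change c + t = c + (r + t - r)
  omega

end DisjointFamily
end regionK

theorem regionWeight_canonicalFamily (x : ℕ → ℕ → ℝ) {k n r c : ℕ} (hr : r < k)
    (hc : c < n - k) :
    (canonicalFamily hr hc).regionWeight x = diagProd k (n - k) x r c := by
  have hsources :
      (range k).filter (· ∉ regionK k n r c) = Ico r (r + min (k - r) (n - k - c)) := by
    ext i
    simp only [mem_filter, mem_range, mem_Ico]
    constructor
    · rintro ⟨hi, h⟩
      exact (notMem_regionK_iff hr hc hi).mp h
    · intro hi
      exact ⟨by omega, (notMem_regionK_iff hr hc (by omega)).mpr hi⟩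
  calc (canonicalFamily hr hc).regionWeight x
      = ∏ i ∈ range k,
          if i ∉ regionK k n r c then rectProd k (n - k) x i (c + (i - r)) else 1 := by
        rw [DisjointFamily.regionWeight, ← Fin.prod_univ_eq_prod_range]
        refine prod_congr rfl fun i _ => ?_
        by_cases h : (i : ℕ) ∉ regionK k n r c
        · rw [dif_pos h, if_pos h]
          exact WebPath.regionProd_const x _ _
        · rw [dif_neg h, if_neg h]
    _ = diagProd k (n - k) x r c := by
        rw [← prod_filter, hsources, prod_Ico_eq_prod_range, diagProd, Nat.add_sub_cancel_left]
        simp only [Nat.add_sub_cancel_left]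

theorem webP_regionK (x : ℕ → ℕ → ℝ) (k n r c : ℕ) :
    webP k n x (regionK k n r c) = diagProd k (n - k) x r c := by
  by_cases hrc : r < k ∧ c < n - k
  · obtain ⟨hr, hc⟩ := hrc
    have hne : regionK k n r c ≠ ∅ :=
      ne_empty_of_mem ((sub_mem_regionK_iff hr hc hc).mpr (by omega))
    let _ : Unique (DisjointFamily k n (regionK k n r c)) :=
      ⟨⟨canonicalFamily hr hc⟩, fun Fam => Fam.eq_canonicalFamily hr hc⟩
    rw [webP, if_neg hne, finsum_unique]
    exact regionWeight_canonicalFamily x hr hc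
  · rw [regionK, if_neg hrc, webP, if_pos rfl, diagProd,
      show min (k - r) (n - k - c) = 0 by omega, range_zero, prod_empty]

theorem psi_phi_eq_id_general (k n : ℕ)
    (x : ℕ → ℕ → ℝ) (hx : ∀ r c, 0 < x r c)
    (r c : ℕ) (hr : r < k) (hc : c < n - k) :
    (webP k n x (regionK k n r c) * webP k n x (regionK k n (r+1) (c+2)) *
        webP k n x (regionK k n (r+2) (c+1))) /
      (webP k n x (regionK k n r (c+1)) * webP k n x (regionK k n (r+1) c) *
        webP k n x (regionK k n (r+2) (c+2))) = x r c := by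
  simp only [webP_regionK]
  have hpos := diagProd_pos (k := k) (nk := n - k) x hx
  rw [div_eq_iff (mul_pos (mul_pos (hpos _ _) (hpos _ _)) (hpos _ _)).ne',
    diagProd_eq_rectProd_mul x r c, diagProd_eq_rectProd_mul x (r + 1) (c + 1),
      diagProd_eq_rectProd_mul x r (c + 1), diagProd_eq_rectProd_mul x (r + 1) c]
  linear_combination diagProd k (n - k) x (r + 2) (c + 2) * diagProd k (n - k) x (r + 1) (c + 2) *
    diagProd k (n - k) x (r + 2) (c + 1) * rectProd_mul_rectProd_succ x hr hc

/-- `Ψ` is a left inverse of `Φ₁`: for any assignment `x` of positive reals to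
the regions of `Web_{k,n}` and every region `(r, c)`,
`(P_{K(i,j)} P_{K(i+1,j-2)} P_{K(i+2,j-1)}) / (P_{K(i,j-1)} P_{K(i+1,j)} P_{K(i+2,j-2)})`
evaluated at `Φ₁(x)` recovers the region variable `x r c` (in cell coordinates,
the label `(i+1, j-2)` becomes `(r+1, c+2)`, etc.). -/
theorem psi_phi_eq_id (k n : ℕ) (hk : 0 < k) (hkn : k < n)
    (x : ℕ → ℕ → ℝ) (hx : ∀ r c, 0 < x r c)
    (r c : ℕ) (hr : r < k) (hc : c < n - k) :
    (webP k n x (regionK k n r c) * webP k n x (regionK k n (r+1) (c+2)) *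
        webP k n x (regionK k n (r+2) (c+1))) /
      (webP k n x (regionK k n r (c+1)) * webP k n x (regionK k n (r+1) c) *
        webP k n x (regionK k n (r+2) (c+2))) = x r c :=
  psi_phi_eq_id_general k n x hx r c hr hc
end

section
/- For the web diagram Web_{2,5} with inner region variables x_1 (right inner region) and x_2 (left inner region), the tropical Plücker coordinates modulo the lineality space are: Trop P_{1j} = 0 for all j, Trop P_{23} = 0, Trop P_{24} = min(x_1, 0), Trop P_{25} = min(x_1+x_2, x_1, 0), Trop P_{34} = x_1, Trop P_{35} = min(x_1, x_1+x_2), Trop P_{45} = x_1+x_2; and the common refinement of the domains of linearity of these seven piecewise linear functions on R^2 is a complete fan with exactly 5 maximal cones. -/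
/-- The tropical weight of a path in `Web_{2,5}`: the sum of the inner region
variables lying below the path, where `x₁` is the variable of the right inner
region (cell `(0,1)`) and `x₂` that of the left inner region (cell `(0,0)`);
the outer region variables are set to `0`. -/
def tropPathWeight (p : WebPath 2 3) (x₁ x₂ : ℝ) : ℝ :=
  ∑ r ∈ Finset.Icc p.src 1, ∑ c ∈ Finset.Icc (p.d r) 2,
    (if r = 0 ∧ c = 0 then x₂ else if r = 0 ∧ c = 1 then x₁ else 0)

/-- The tropical weight of a disjoint path family in `Web_{2,5}`. -/
def tropFamilyWeight {K : Finset ℕ} (Fam : DisjointFamily 2 5 K)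
    (x₁ x₂ : ℝ) : ℝ :=
  ∑ i : Fin 2, if h : (i : ℕ) ∉ K then tropPathWeight (Fam.F i h) x₁ x₂ else 0

/-- The tropical Plücker coordinate `Trop P_K` for `Web_{2,5}` (with outer
region variables set to `0`, i.e. modulo the lineality space): the minimum over
all vertex-disjoint path families for `K` of the sums of the inner region
variables below the paths. -/
noncomputable def tropP (K : Finset ℕ) (x₁ x₂ : ℝ) : ℝ :=
  sInf {t | ∃ Fam : DisjointFamily 2 5 K, t = tropFamilyWeight Fam x₁ x₂}

/-- `f : ℝ² → ℝ` agrees with a linear function on `S`. -/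
def IsLinearOn (f : ℝ × ℝ → ℝ) (S : Set (ℝ × ℝ)) : Prop :=
  ∃ a b : ℝ, ∀ v ∈ S, f v = a * v.1 + b * v.2

/-- The ten `2`-element subsets of the (`0`-indexed) labels `{0,…,4}`. -/
def allK : List (Finset ℕ) :=
  [{0,1}, {0,2}, {0,3}, {0,4}, {1,2}, {1,3}, {1,4}, {2,3}, {2,4}, {3,4}]


/-!
A path from the bottom source of `Web_{2,5}` runs below no inner region, while a path from the
top source runs below `x₁ + x₂`, `x₁` or nothing according as it turns down at column `0`, `1`
or `2`. So `Trop P_K` is the minimum of these values over the admissible turning columns, which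
are cut out by the sink conditions and, when both sources are used, by vertex-disjointness: the
top path must turn strictly left of the sink of the bottom path.

The resulting functions are linear on the five cones cut out by `x₁ = 0`, `x₂ = 0` and, inside
`x₁ ≥ 0 ≥ x₂`, by `x₁ + x₂ = 0`. Conversely, if `min f g` is linear on a convex set, one of
`f ≤ g`, `g ≤ f` holds throughout it, so a convex set on which all the coordinates are linear
cannot cross any of these lines.
-/

open Finset

namespace WebPath

/-- The path from the top source that turns down at column `a` and exits at column `b`. -/
def topPath (a b : ℕ) (hba : b ≤ a) (ha : a < 3) : WebPath 2 3 where
  src := 0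
  d r := if r = 0 then a else b
  src_lt := by norm_num
  d_lt r := by split <;> omega
  anti r s _ := by split <;> split <;> omega
  low r hr := by rw [Nat.le_zero.mp hr]
  high r hr := by split <;> [omega; rfl]

def bottomPath (c : ℕ) (hc : c < 3) : WebPath 2 3 where
  src := 1
  d _ := c
  src_lt := by norm_num
  d_lt _ := hc
  anti _ _ _ := le_rfl
  low _ _ := rfl
  high _ _ := rfl

theorem disjoint_topPath_bottomPath {a b c : ℕ} (hba : b ≤ a) (ha : a < 3) (hc : c < 3)
    (hac : a < c) : Disjoint (topPath a b hba ha).vertexSet (bottomPath c hc).vertexSet := by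
  rw [Set.disjoint_left]
  rintro ⟨r, col⟩ ⟨h₁, h₂, h₃, h₄⟩ ⟨g₁, g₂, g₃, g₄⟩
  obtain rfl : r = 1 := by simp only [topPath, bottomPath] at h₁ h₂ g₁; omega
  simp only [topPath, bottomPath, one_ne_zero, ↓reduceIte, tsub_self] at h₄ g₃
  omega

/-- The top path passes through `(1, p.d 0)`, which the bottom path covers unless it exits
strictly to the right of that column. -/
theorem d_zero_lt_sink_of_disjoint {p q : WebPath 2 3} (hp : p.src = 0) (hq : q.src = 1)
    (hpq : Disjoint p.vertexSet q.vertexSet) : p.d 0 < q.sink := by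
  by_contra! h
  have hp₁ : ((1 : ℕ), p.d 0) ∈ p.vertexSet :=
    ⟨by omega, by omega, p.anti zero_le_one, by simp [hp]⟩
  have hq₁ : ((1 : ℕ), p.d 0) ∈ q.vertexSet :=
    ⟨by omega, by omega, h, by simpa [hq] using Nat.le_of_lt_succ (p.d_lt 0)⟩
  exact Set.disjoint_left.mp hpq hp₁ hq₁

end WebPath

open WebPath

/-- The inner region variables in the top row lying to the right of column `a`. -/
def topRowWeight (x₁ x₂ : ℝ) : ℕ → ℝ
  | 0 => x₁ + x₂
  | 1 => x₁
  | _ => 0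

theorem tropPathWeight_of_src_eq_one {p : WebPath 2 3} (hp : p.src = 1) (x₁ x₂ : ℝ) :
    tropPathWeight p x₁ x₂ = 0 := by
  simp [tropPathWeight, hp]

theorem tropPathWeight_of_src_eq_zero {p : WebPath 2 3} (hp : p.src = 0) (x₁ x₂ : ℝ) :
    tropPathWeight p x₁ x₂ = topRowWeight x₁ x₂ (p.d 0) := by
  have hd : p.d 0 < 3 := p.d_lt 0
  rw [tropPathWeight, hp, show Icc 0 1 = {0, 1} by decide, sum_pair zero_ne_one]
  interval_cases h : p.d 0
  · simp [show Icc 0 2 = {0, 1, 2} by decide, topRowWeight, add_comm]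
  · simp [show Icc 1 2 = {1, 2} by decide, topRowWeight]
  · simp [topRowWeight]

def DisjointFamily.ofPaths (K : Finset ℕ) (p q : WebPath 2 3)
    (hp : 0 ∉ K → p.src = 0 ∧ 4 - p.sink ∈ K)
    (hq : 1 ∉ K → q.src = 1 ∧ 4 - q.sink ∈ K)
    (hpq : 0 ∉ K → 1 ∉ K → p.sink ≠ q.sink ∧ Disjoint p.vertexSet q.vertexSet) :
    DisjointFamily 2 5 K where
  F i _ := if (i : ℕ) = 0 then p else q
  src_eq i h := by fin_cases i <;> simp_all
  sink_mem i h := by fin_cases i <;> simp_all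
  sink_inj i h i' h' := by fin_cases i <;> fin_cases i' <;> simp_all [eq_comm]
  disj i h i' h' := by
    fin_cases i <;> fin_cases i' <;> simp_all [Disjoint.symm]

theorem tropFamilyWeight_of_zero_mem {K : Finset ℕ} (Fam : DisjointFamily 2 5 K) (h₀ : 0 ∈ K)
    (x₁ x₂ : ℝ) : tropFamilyWeight Fam x₁ x₂ = 0 := by
  rw [tropFamilyWeight, Fin.sum_univ_two,
    dif_neg (show ¬((0 : Fin 2) : ℕ) ∉ K from not_not_intro h₀), zero_add]
  by_cases h₁ : ((1 : Fin 2) : ℕ) ∈ K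
  · rw [dif_neg (not_not_intro h₁)]
  · rw [dif_pos h₁, tropPathWeight_of_src_eq_one (by simpa using Fam.src_eq 1 h₁)]

theorem tropFamilyWeight_of_zero_notMem {K : Finset ℕ} (Fam : DisjointFamily 2 5 K)
    (h₀ : 0 ∉ K) (x₁ x₂ : ℝ) :
    tropFamilyWeight Fam x₁ x₂ = topRowWeight x₁ x₂ ((Fam.F 0 h₀).d 0) := by
  rw [tropFamilyWeight, Fin.sum_univ_two, dif_pos (show ((0 : Fin 2) : ℕ) ∉ K from h₀),
    tropPathWeight_of_src_eq_zero (by simpa using Fam.src_eq 0 h₀)]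
  by_cases h₁ : ((1 : Fin 2) : ℕ) ∈ K
  · rw [dif_neg (not_not_intro h₁), add_zero]
  · rw [dif_pos h₁, tropPathWeight_of_src_eq_one (by simpa using Fam.src_eq 1 h₁), add_zero]

theorem tropP_of_zero_mem {K : Finset ℕ} (h₀ : 0 ∈ K) (Fam : DisjointFamily 2 5 K)
    (x₁ x₂ : ℝ) : tropP K x₁ x₂ = 0 := by
  have : {t | ∃ Fam : DisjointFamily 2 5 K, t = tropFamilyWeight Fam x₁ x₂} = {0} :=
    Set.eq_singleton_iff_unique_mem.mpr ⟨⟨Fam, (tropFamilyWeight_of_zero_mem Fam h₀ x₁ x₂).symm⟩,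
      fun _ ⟨F, hF⟩ => hF ▸ tropFamilyWeight_of_zero_mem F h₀ x₁ x₂⟩
  rw [tropP, this, csInf_singleton]

def topTurnColumns (K : Finset ℕ) : Set ℕ :=
  {a | ∃ (Fam : DisjointFamily 2 5 K) (h₀ : 0 ∉ K), (Fam.F 0 h₀).d 0 = a}

theorem tropP_eq_sInf_image {K : Finset ℕ} (h₀ : 0 ∉ K) (x₁ x₂ : ℝ) :
    tropP K x₁ x₂ = sInf (topRowWeight x₁ x₂ '' topTurnColumns K) := by
  rw [tropP]
  congr 1
  ext t
  constructor
  · rintro ⟨Fam, rfl⟩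
    exact ⟨_, ⟨Fam, h₀, rfl⟩, (tropFamilyWeight_of_zero_notMem Fam h₀ x₁ x₂).symm⟩
  · rintro ⟨_, ⟨Fam, h₀, rfl⟩, rfl⟩
    exact ⟨Fam, (tropFamilyWeight_of_zero_notMem Fam h₀ x₁ x₂).symm⟩

theorem topTurnColumns_of_one_mem {K : Finset ℕ} (h₀ : 0 ∉ K) (h₁ : 1 ∈ K) :
    topTurnColumns K = ↑({a ∈ range 3 | ∃ b ≤ a, 4 - b ∈ K} : Finset ℕ) := by
  ext a
  simp only [coe_filter, mem_range, Set.mem_ofPred_eq]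
  constructor
  · rintro ⟨Fam, h₀, rfl⟩
    exact ⟨(Fam.F 0 h₀).d_lt 0, _, (Fam.F 0 h₀).anti zero_le_one, Fam.sink_mem 0 h₀⟩
  · rintro ⟨ha, b, hba, hb⟩
    exact ⟨.ofPaths K (topPath a b hba ha) (bottomPath 0 (by norm_num)) (fun _ => ⟨rfl, hb⟩)
      (fun h => absurd h₁ h) (fun _ h => absurd h₁ h), h₀, rfl⟩

theorem topTurnColumns_of_one_notMem {K : Finset ℕ} (h₀ : 0 ∉ K) (h₁ : 1 ∉ K) :
    topTurnColumns K =
      ↑({a ∈ range 3 | ∃ b ≤ a, ∃ c ∈ Ioo a 3, 4 - b ∈ K ∧ 4 - c ∈ K} : Finset ℕ) := by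
  ext a
  simp only [coe_filter, mem_range, mem_Ioo, Set.mem_ofPred_eq]
  constructor
  · rintro ⟨Fam, h₀, rfl⟩
    have hq : (Fam.F 1 h₁).src = 1 := by simpa using Fam.src_eq 1 h₁
    exact ⟨(Fam.F 0 h₀).d_lt 0, _, (Fam.F 0 h₀).anti zero_le_one, _,
      ⟨d_zero_lt_sink_of_disjoint (by simpa using Fam.src_eq 0 h₀) hq
        (Fam.disj 0 h₀ 1 h₁ (by decide)), (Fam.F 1 h₁).d_lt 1⟩,
      Fam.sink_mem 0 h₀, Fam.sink_mem 1 h₁⟩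
  · rintro ⟨ha, b, hba, c, ⟨hac, hc⟩, hb, hcK⟩
    exact ⟨.ofPaths K (topPath a b hba ha) (bottomPath c hc) (fun _ => ⟨rfl, hb⟩)
      (fun _ => ⟨rfl, hcK⟩)
      (fun _ _ => ⟨by simp [sink, topPath, bottomPath]; omega,
        disjoint_topPath_bottomPath hba ha hc hac⟩), h₀, rfl⟩

theorem tropP_zero_insert {j : ℕ} (hj₁ : 1 ≤ j) (hj₄ : j ≤ 4) (x₁ x₂ : ℝ) :
    tropP {0, j} x₁ x₂ = 0 := by
  have h₀ : 0 ∈ ({0, j} : Finset ℕ) := mem_insert_self 0 _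
  refine tropP_of_zero_mem h₀ (.ofPaths _ (topPath 0 0 le_rfl (by norm_num))
    (bottomPath (min (4 - j) 2) (by omega)) (absurd h₀) (fun h₁ => ⟨rfl, ?_⟩) (absurd h₀)) x₁ x₂
  have : j ≠ 1 := by rintro rfl; simp at h₁
  simp only [sink, bottomPath, mem_insert, mem_singleton]
  omega

theorem tropP_one_two (x₁ x₂ : ℝ) : tropP {1, 2} x₁ x₂ = 0 := by
  rw [tropP_eq_sInf_image (by decide), topTurnColumns_of_one_mem (by decide) (by decide),
    show ({a ∈ range 3 | ∃ b ≤ a, 4 - b ∈ ({1, 2} : Finset ℕ)} : Finset ℕ) = {2} by decide]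
  simp [topRowWeight]

theorem tropP_one_three (x₁ x₂ : ℝ) : tropP {1, 3} x₁ x₂ = min x₁ 0 := by
  rw [tropP_eq_sInf_image (by decide), topTurnColumns_of_one_mem (by decide) (by decide),
    show ({a ∈ range 3 | ∃ b ≤ a, 4 - b ∈ ({1, 3} : Finset ℕ)} : Finset ℕ) = {1, 2} by decide]
  simp only [coe_insert, coe_singleton, Set.image_insert_eq, Set.image_singleton, topRowWeight]
  exact csInf_pair _ _

theorem tropP_one_four (x₁ x₂ : ℝ) : tropP {1, 4} x₁ x₂ = min (x₁ + x₂) (min x₁ 0) := by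
  rw [tropP_eq_sInf_image (by decide), topTurnColumns_of_one_mem (by decide) (by decide),
    show ({a ∈ range 3 | ∃ b ≤ a, 4 - b ∈ ({1, 4} : Finset ℕ)} : Finset ℕ) = {0, 1, 2} by
      decide]
  simp only [coe_insert, coe_singleton, Set.image_insert_eq, Set.image_singleton, topRowWeight]
  rw [csInf_insert (by simp) (by simp), csInf_pair]

theorem tropP_two_three (x₁ x₂ : ℝ) : tropP {2, 3} x₁ x₂ = x₁ := by
  rw [tropP_eq_sInf_image (by decide), topTurnColumns_of_one_notMem (by decide) (by decide),
    show ({a ∈ range 3 | ∃ b ≤ a, ∃ c ∈ Ioo a 3, 4 - b ∈ ({2, 3} : Finset ℕ) ∧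
      4 - c ∈ ({2, 3} : Finset ℕ)} : Finset ℕ) = {1} by decide]
  simp [topRowWeight]

theorem tropP_two_four (x₁ x₂ : ℝ) : tropP {2, 4} x₁ x₂ = min x₁ (x₁ + x₂) := by
  rw [tropP_eq_sInf_image (by decide), topTurnColumns_of_one_notMem (by decide) (by decide),
    show ({a ∈ range 3 | ∃ b ≤ a, ∃ c ∈ Ioo a 3, 4 - b ∈ ({2, 4} : Finset ℕ) ∧
      4 - c ∈ ({2, 4} : Finset ℕ)} : Finset ℕ) = {1, 0} by decide]
  simp only [coe_insert, coe_singleton, Set.image_insert_eq, Set.image_singleton, topRowWeight]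
  exact csInf_pair _ _

theorem tropP_three_four (x₁ x₂ : ℝ) : tropP {3, 4} x₁ x₂ = x₁ + x₂ := by
  rw [tropP_eq_sInf_image (by decide), topTurnColumns_of_one_notMem (by decide) (by decide),
    show ({a ∈ range 3 | ∃ b ≤ a, ∃ c ∈ Ioo a 3, 4 - b ∈ ({3, 4} : Finset ℕ) ∧
      4 - c ∈ ({3, 4} : Finset ℕ)} : Finset ℕ) = {0} by decide]
  simp [topRowWeight]

theorem interior_setOf_nonneg {E : Type*} [NormedAddCommGroup E] [NormedSpace ℝ E]
    [CompleteSpace E] (ℓ : E →L[ℝ] ℝ) (hℓ : Function.Surjective ℓ) :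
    interior {v | 0 ≤ ℓ v} = {v | 0 < ℓ v} := by
  have h := ℓ.interior_preimage hℓ (Set.Ici 0)
  rwa [interior_Ici] at h

def halfPlane (a b : ℝ) : Set (ℝ × ℝ) := {v | 0 ≤ a * v.1 + b * v.2}

theorem isClosed_halfPlane (a b : ℝ) : IsClosed (halfPlane a b) :=
  isClosed_le continuous_const (by fun_prop)

theorem convex_halfPlane (a b : ℝ) : Convex ℝ (halfPlane a b) :=
  convex_halfSpace_ge ⟨fun u v => by simp only [Prod.fst_add, Prod.snd_add]; ring,
    fun c v => by simp only [Prod.smul_fst, Prod.smul_snd, smul_eq_mul]; ring⟩ 0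

theorem smul_mem_halfPlane {a b c : ℝ} (hc : 0 ≤ c) {v : ℝ × ℝ} (hv : v ∈ halfPlane a b) :
    c • v ∈ halfPlane a b := by
  have : 0 ≤ c * (a * v.1 + b * v.2) := mul_nonneg hc hv
  simp only [halfPlane, Set.mem_ofPred_eq, Prod.smul_fst, Prod.smul_snd, smul_eq_mul]
  linarith

theorem interior_halfPlane {a b : ℝ} (hab : (a, b) ≠ 0) :
    interior (halfPlane a b) = {v | 0 < a * v.1 + b * v.2} := by
  let ℓ : ℝ × ℝ →L[ℝ] ℝ := a • ContinuousLinearMap.fst ℝ ℝ ℝ + b • ContinuousLinearMap.snd ℝ ℝ ℝ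
  have hℓ : ∀ v, ℓ v = a * v.1 + b * v.2 := fun v => by simp [ℓ]
  have hsurj : Function.Surjective ℓ := by
    have hn : a ^ 2 + b ^ 2 ≠ 0 := by
      contrapose! hab
      simp only [Prod.mk_eq_zero]
      constructor <;> nlinarith [sq_nonneg a, sq_nonneg b]
    intro t
    refine ⟨(t / (a ^ 2 + b ^ 2)) • (a, b), ?_⟩
    rw [hℓ]
    simp only [Prod.smul_fst, Prod.smul_snd, smul_eq_mul]
    field_simp
  simpa only [halfPlane, hℓ] using interior_setOf_nonneg ℓ hsurj

def fanCone : Fin 5 → Set (ℝ × ℝ) :=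
  ![halfPlane 1 0 ∩ halfPlane 0 1, halfPlane (-1) 0 ∩ halfPlane 0 1,
    halfPlane (-1) 0 ∩ halfPlane 0 (-1), halfPlane 1 0 ∩ halfPlane (-1) (-1),
    halfPlane 1 1 ∩ halfPlane 0 (-1)]

theorem mem_fanCone_iff {m : Fin 5} {v : ℝ × ℝ} : v ∈ fanCone m ↔
    ![0 ≤ v.1 ∧ 0 ≤ v.2, v.1 ≤ 0 ∧ 0 ≤ v.2, v.1 ≤ 0 ∧ v.2 ≤ 0, 0 ≤ v.1 ∧ v.1 + v.2 ≤ 0,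
      0 ≤ v.1 + v.2 ∧ v.2 ≤ 0] m := by
  fin_cases m <;>
  · simp only [fanCone, Fin.reduceFinMk, Matrix.cons_val, Set.mem_inter_iff, halfPlane,
      Set.mem_ofPred_eq]
    constructor <;> rintro ⟨h₁, h₂⟩ <;> constructor <;> linarith

theorem isClosed_fanCone (m : Fin 5) : IsClosed (fanCone m) := by
  fin_cases m <;> exact (isClosed_halfPlane _ _).inter (isClosed_halfPlane _ _)

theorem convex_fanCone (m : Fin 5) : Convex ℝ (fanCone m) := by
  fin_cases m <;> exact (convex_halfPlane _ _).inter (convex_halfPlane _ _)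

theorem smul_mem_fanCone (m : Fin 5) {c : ℝ} (hc : 0 ≤ c) {v : ℝ × ℝ} (hv : v ∈ fanCone m) :
    c • v ∈ fanCone m := by
  fin_cases m <;> exact ⟨smul_mem_halfPlane hc hv.1, smul_mem_halfPlane hc hv.2⟩

theorem interior_fanCone (m : Fin 5) : interior (fanCone m) =
    ![{v | 0 < v.1 ∧ 0 < v.2}, {v | v.1 < 0 ∧ 0 < v.2}, {v | v.1 < 0 ∧ v.2 < 0},
      {v | 0 < v.1 ∧ v.1 + v.2 < 0}, {v | 0 < v.1 + v.2 ∧ v.2 < 0}] m := by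
  fin_cases m <;>
  · simp only [fanCone, Fin.reduceFinMk, Matrix.cons_val, interior_inter]
    rw [interior_halfPlane (by simp), interior_halfPlane (by simp)]
    ext v
    simp only [Set.mem_inter_iff, Set.mem_ofPred_eq]
    constructor <;> rintro ⟨h₁, h₂⟩ <;> constructor <;> linarith

theorem interior_fanCone_nonempty (m : Fin 5) : (interior (fanCone m)).Nonempty := by
  rw [interior_fanCone]
  fin_cases m
  exacts [⟨(1, 1), by norm_num⟩, ⟨(-1, 1), by norm_num⟩, ⟨(-1, -1), by norm_num⟩,
    ⟨(1, -2), by norm_num⟩, ⟨(2, -1), by norm_num⟩]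

theorem interior_fanCone_inter_interior {m m' : Fin 5} (h : m ≠ m') :
    interior (fanCone m) ∩ interior (fanCone m') = ∅ := by
  simp only [interior_fanCone, Set.eq_empty_iff_forall_notMem]
  fin_cases m <;> fin_cases m' <;> first
    | exact absurd rfl h
    | (rintro v ⟨⟨h₁, h₂⟩, h₃, h₄⟩; linarith)

theorem iUnion_fanCone : ⋃ m, fanCone m = Set.univ := by
  refine Set.eq_univ_of_forall fun v => Set.mem_iUnion.mpr ?_
  rcases le_total 0 v.1 with h₁ | h₁ <;> rcases le_total 0 v.2 with h₂ | h₂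
  · exact ⟨0, mem_fanCone_iff.mpr ⟨h₁, h₂⟩⟩
  · rcases le_total 0 (v.1 + v.2) with h₃ | h₃
    · exact ⟨4, mem_fanCone_iff.mpr ⟨h₃, h₂⟩⟩
    · exact ⟨3, mem_fanCone_iff.mpr ⟨h₁, h₃⟩⟩
  · exact ⟨1, mem_fanCone_iff.mpr ⟨h₁, h₂⟩⟩
  · exact ⟨2, mem_fanCone_iff.mpr ⟨h₁, h₂⟩⟩

theorem isLinearOn_tropP_fanCone (m : Fin 5) :
    ∀ K ∈ allK, IsLinearOn (fun v => tropP K v.1 v.2) (fanCone m) := by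
  simp (disch := omega) only [allK, List.mem_cons, List.mem_nil_iff, or_false,
    forall_eq_or_imp, forall_eq, tropP_zero_insert, tropP_one_two, tropP_one_three,
    tropP_one_four, tropP_two_three, tropP_two_four, tropP_three_four]
  fin_cases m <;> refine ⟨?_, ?_, ?_, ?_, ?_, ?_, ?_, ?_, ?_, ?_⟩ <;>
    simp only [IsLinearOn, fanCone, Fin.reduceFinMk, Matrix.cons_val, Set.mem_inter_iff,
      halfPlane, Set.mem_ofPred_eq, min_def] <;>
    first
    | (refine ⟨0, 0, fun v hv => ?_⟩; (try split_ifs) <;> linarith)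
    | (refine ⟨1, 0, fun v hv => ?_⟩; (try split_ifs) <;> linarith)
    | (refine ⟨1, 1, fun v hv => ?_⟩; (try split_ifs) <;> linarith)

/-- At the midpoint of a segment from a point where `g < f` to one where `f < g`, both `f` and
`g` would exceed the linear interpolation of `min f g`. -/
theorem Convex.le_or_ge_of_min_eq_linearMap {𝕜 E : Type*} [Field 𝕜] [LinearOrder 𝕜]
    [IsStrictOrderedRing 𝕜] [AddCommGroup E] [Module 𝕜 E] {S : Set E} (hS : Convex 𝕜 S)
    {f g h : E →ₗ[𝕜] 𝕜} (hmin : ∀ v ∈ S, min (f v) (g v) = h v) :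
    (∀ v ∈ S, f v ≤ g v) ∨ ∀ v ∈ S, g v ≤ f v := by
  by_contra! hc
  obtain ⟨⟨u, hu, hgu⟩, ⟨w, hw, hfw⟩⟩ := hc
  have hu' := hmin u hu
  have hw' := hmin w hw
  rw [min_eq_right hgu.le] at hu'
  rw [min_eq_left hfw.le] at hw'
  have hmid := hmin _ (hS hu hw (by norm_num : (0 : 𝕜) ≤ 1 / 2) (by norm_num) (add_halves 1))
  simp only [map_add, map_smul, smul_eq_mul, ← hu', ← hw'] at hmid
  have : 1 / 2 * g u + 1 / 2 * f w < min (1 / 2 * f u + 1 / 2 * f w) (1 / 2 * g u + 1 / 2 * g w) :=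
    lt_min (by linarith) (by linarith)
  linarith

theorem IsLinearOn.le_or_ge_of_min {S : Set (ℝ × ℝ)} (hS : Convex ℝ S)
    {f g : ℝ × ℝ →ₗ[ℝ] ℝ} (hlin : IsLinearOn (fun v => min (f v) (g v)) S) :
    (∀ v ∈ S, f v ≤ g v) ∨ ∀ v ∈ S, g v ≤ f v := by
  obtain ⟨a, b, hab⟩ := hlin
  exact hS.le_or_ge_of_min_eq_linearMap (h := a • LinearMap.fst ℝ ℝ ℝ + b • LinearMap.snd ℝ ℝ ℝ)
    fun v hv => by simpa using hab v hv

/-- `Trop P_{24}` and `Trop P_{35}` fix the signs of `x₁` and of `x₂` on `S`; when `x₁ ≥ 0 ≥ x₂`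
on `S`, `Trop P_{25} = min (x₁ + x₂) 0` fixes the sign of `x₁ + x₂` as well. -/
theorem exists_fanCone_superset {S : Set (ℝ × ℝ)} (hS : Convex ℝ S)
    (hlin : ∀ K ∈ allK, IsLinearOn (fun v => tropP K v.1 v.2) S) : ∃ m, S ⊆ fanCone m := by
  have h₁₃ := hlin {1, 3} (by simp [allK])
  have h₁₄ := hlin {1, 4} (by simp [allK])
  have h₂₄ := hlin {2, 4} (by simp [allK])
  simp only [tropP_one_three, tropP_one_four, tropP_two_four] at h₁₃ h₁₄ h₂₄
  have hx₁ := h₁₃.le_or_ge_of_min hS (f := LinearMap.fst ℝ ℝ ℝ) (g := 0)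
  have hx₂ := h₂₄.le_or_ge_of_min hS (f := LinearMap.fst ℝ ℝ ℝ)
    (g := LinearMap.fst ℝ ℝ ℝ + LinearMap.snd ℝ ℝ ℝ)
  simp only [LinearMap.fst_apply, LinearMap.zero_apply, LinearMap.add_apply,
    LinearMap.snd_apply, le_add_iff_nonneg_right, add_le_iff_nonpos_right] at hx₁ hx₂
  rcases hx₁ with hx₁ | hx₁ <;> rcases hx₂ with hx₂ | hx₂
  · exact ⟨1, fun v hv => mem_fanCone_iff.mpr ⟨hx₁ v hv, hx₂ v hv⟩⟩
  · exact ⟨2, fun v hv => mem_fanCone_iff.mpr ⟨hx₁ v hv, hx₂ v hv⟩⟩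
  · exact ⟨0, fun v hv => mem_fanCone_iff.mpr ⟨hx₁ v hv, hx₂ v hv⟩⟩
  · have h₂₅ : IsLinearOn (fun v => min (v.1 + v.2) 0) S := by
      obtain ⟨a, b, hab⟩ := h₁₄
      refine ⟨a, b, fun v hv => ?_⟩
      simpa only [min_eq_right (hx₁ v hv)] using hab v hv
    rcases h₂₅.le_or_ge_of_min hS (f := LinearMap.fst ℝ ℝ ℝ + LinearMap.snd ℝ ℝ ℝ) (g := 0)
      with hx₃ | hx₃
    · exact ⟨3, fun v hv => mem_fanCone_iff.mpr ⟨hx₁ v hv, by simpa using hx₃ v hv⟩⟩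
    · exact ⟨4, fun v hv => mem_fanCone_iff.mpr ⟨by simpa using hx₃ v hv, hx₂ v hv⟩⟩

/-- Labels are `0`-indexed: `P_{ij}` of the paper is `tropP {i-1, j-1}`. -/
theorem trop_gr25_formulas_and_fan :
    (∀ x₁ x₂ : ℝ,
      (∀ j : ℕ, 1 ≤ j → j ≤ 4 → tropP {0, j} x₁ x₂ = 0) ∧
      tropP {1, 2} x₁ x₂ = 0 ∧
      tropP {1, 3} x₁ x₂ = min x₁ 0 ∧
      tropP {1, 4} x₁ x₂ = min (x₁ + x₂) (min x₁ 0) ∧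
      tropP {2, 3} x₁ x₂ = x₁ ∧
      tropP {2, 4} x₁ x₂ = min x₁ (x₁ + x₂) ∧
      tropP {3, 4} x₁ x₂ = x₁ + x₂) ∧
    (∃ C : Fin 5 → Set (ℝ × ℝ),
      (∀ m, IsClosed (C m) ∧ Convex ℝ (C m) ∧
        (∀ (c : ℝ), 0 ≤ c → ∀ v ∈ C m, c • v ∈ C m) ∧
        (interior (C m)).Nonempty) ∧
      (⋃ m, C m) = Set.univ ∧
      (∀ m m', m ≠ m' → interior (C m) ∩ interior (C m') = ∅) ∧
      (∀ m, ∀ K ∈ allK, IsLinearOn (fun v => tropP K v.1 v.2) (C m)) ∧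
      (∀ S : Set (ℝ × ℝ), Convex ℝ S →
        (∀ K ∈ allK, IsLinearOn (fun v => tropP K v.1 v.2) S) →
        ∃ m, S ⊆ C m)) := by
  refine ⟨fun x₁ x₂ => ⟨fun j hj₁ hj₄ => tropP_zero_insert hj₁ hj₄ x₁ x₂, tropP_one_two x₁ x₂,
      tropP_one_three x₁ x₂, tropP_one_four x₁ x₂, tropP_two_three x₁ x₂, tropP_two_four x₁ x₂,
      tropP_three_four x₁ x₂⟩,
    fanCone, fun m => ⟨isClosed_fanCone m, convex_fanCone m,
      fun _ hc _ hv => smul_mem_fanCone m hc hv, interior_fanCone_nonempty m⟩,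
    iUnion_fanCone, fun _ _ h => interior_fanCone_inter_interior h, isLinearOn_tropP_fanCone,
    fun _ hS hlin => exists_fanCone_superset hS hlin⟩
end
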